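/- Let T be an infinite, locally finite rooted tree that is uniformly transient. Then λ ↦ C(λ,T) is left continuous on (λ_c(T), +∞). -/

import Mathlib

open scoped Classical ENNReal
open Filter

/-- A rooted tree with vertex labels in `A`, modeled as a set of finite words over `A`
closed under taking initial segments. The root is the empty word `[]`, and the children
of a vertex `v` are the words `v ++ [a]` belonging to the tree. -/
structure RTree (A : Type*) where
  mem : Set (List A)
  root_mem : [] ∈ mem
  parent_mem : ∀ (v : List A) (a : A), v ++ [a] ∈ mem → v ∈ mem

namespace RTree

variable {A : Type*}

/-- The tree is locally finite: every vertex has finitely many children. -/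
def LocFin (T : RTree A) : Prop := ∀ v ∈ T.mem, {a : A | v ++ [a] ∈ T.mem}.Finite

/-- Number of children of a vertex. -/
noncomputable def numChildren (T : RTree A) (v : List A) : ℕ :=
  {a : A | v ++ [a] ∈ T.mem}.ncard

/-- Degree of a vertex (number of children, plus one for the parent except at the root). -/
noncomputable def degree (T : RTree A) (v : List A) : ℕ :=
  T.numChildren v + (if v = [] then 0 else 1)

/-- Number of vertices at generation `n`. -/
noncomputable def levelCard (T : RTree A) (n : ℕ) : ℕ :=
  {v ∈ T.mem | v.length = n}.ncard

/-- The subtree of descendants of `y`, rooted at `y`. -/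
def subtree (T : RTree A) (y : List A) : RTree A where
  mem := insert [] {l : List A | y ++ l ∈ T.mem}
  root_mem := Set.mem_insert _ _
  parent_mem := by
    intro v a hv
    rw [Set.mem_insert_iff] at hv
    rcases hv with h | h
    · exact absurd h (by simp)
    · exact Set.mem_insert_iff.mpr <| Or.inr <|
        T.parent_mem (y ++ v) a (by simpa [List.append_assoc] using h)

/-- One-step transition probabilities of the `λ`-biased random walk `RW_λ`:
from a non-root vertex with `k` children, move to the parent with probability
`1/(1+kλ)` and to each child with probability `λ/(1+kλ)`; from the root, move
to each of its children with equal probability. -/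
noncomputable def step (T : RTree A) (lam : ℝ) (x y : List A) : ℝ :=
  if x ∈ T.mem ∧ y ∈ T.mem then
    if ∃ a : A, y = x ++ [a] then
      if x = [] then 1 / (T.numChildren x : ℝ)
      else lam / (1 + (T.numChildren x : ℝ) * lam)
    else if x ≠ [] ∧ y = x.dropLast then 1 / (1 + (T.numChildren x : ℝ) * lam)
    else 0
  else 0

/-- Probability of a finite trajectory (product of one-step transition probabilities). -/
noncomputable def pathProb (T : RTree A) (lam : ℝ) : List (List A) → ℝ
  | [] => 1
  | [_] => 1
  | x :: y :: r => T.step lam x y * pathProb T lam (y :: r)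

/-- Probability that the walk started at the root satisfies the constraint `P i` at
every time `0 ≤ i ≤ M`. -/
noncomputable def cylProb (T : RTree A) (lam : ℝ) (M : ℕ) (P : ℕ → List A → Prop) : ℝ :=
  ∑' l : {l : List (List A) // l.length = M + 1 ∧ l.head? = some ([] : List A) ∧
      ∀ (i : ℕ) (h : i < l.length), P i (l.get ⟨i, h⟩)},
    T.pathProb lam l.1

/-- Probability that the walk started at the root never returns to the root
(the decreasing limit over `M` of the probabilities of no return up to time `M`). -/
noncomputable def escProb (T : RTree A) (lam : ℝ) : ℝ :=
  ⨅ M : ℕ, T.cylProb lam M fun i v => i ≠ 0 → v ≠ []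

/-- Probability that the walk started at the root moves to `y` at its first step and
never returns to the root. -/
noncomputable def escProbVia (T : RTree A) (lam : ℝ) (y : List A) : ℝ :=
  ⨅ M : ℕ, T.cylProb lam M fun i v => (i ≠ 0 → v ≠ []) ∧ (i = 1 → v = y)

/-- `RW_λ` is recurrent: started at the root, it returns to the root almost surely. -/
def Recurrent (T : RTree A) (lam : ℝ) : Prop := T.escProb lam = 0

/-- `RW_λ` is transient: started at the root, it fails to return with positive probability. -/
def Transient (T : RTree A) (lam : ℝ) : Prop := 0 < T.escProb lam

/-- Effective conductance `C(λ,T) = λ·deg(o)·P(no return to the root)`. -/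
noncomputable def conductance (T : RTree A) (lam : ℝ) : ℝ :=
  lam * (T.numChildren ([] : List A) : ℝ) * T.escProb lam

/-- Law of the limit walk: `phi T lam y` is the probability that the walk eventually
stays in the subtree above `y`, i.e. that the limit walk `ω_λ^∞` passes through `y`
(equivalently, `ω_λ^∞(i) = y.take i` for all `i ≤ y.length`). -/
noncomputable def phi (T : RTree A) (lam : ℝ) (y : List A) : ℝ :=
  ⨆ N : ℕ, ⨅ M : ℕ, T.cylProb lam (N + M) fun i v => N ≤ i → y <+: v

/-- An infinite simple path from the root. -/
def IsRay (T : RTree A) (r : ℕ → List A) : Prop :=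
  r 0 = [] ∧ ∀ n, r n ∈ T.mem ∧ ∃ a : A, r (n + 1) = r n ++ [a]

/-- An edge-cutset, each edge being recorded by its endpoint farther from the root:
every infinite simple path from the root uses one of these edges. -/
def IsECutset (T : RTree A) (c : Set (List A)) : Prop :=
  (∀ v ∈ c, v ∈ T.mem ∧ v ≠ []) ∧ ∀ r, T.IsRay r → ∃ n, r (n + 1) ∈ c

/-- A vertex-cutset: every infinite simple path from the root meets it. -/
def IsVCutset (T : RTree A) (c : Set (List A)) : Prop :=
  (∀ v ∈ c, v ∈ T.mem) ∧ ∀ r, T.IsRay r → ∃ n, r n ∈ c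

/-- The branching number `br(T) = sup {λ ≥ 1 : inf over cutsets c of Σ_{e∈c} λ^{-|e|} > 0}`. -/
noncomputable def br (T : RTree A) : ℝ :=
  sSup {lam : ℝ | 1 ≤ lam ∧
    0 < ⨅ (c : Set (List A)) (_ : T.IsECutset c),
      ∑' e : c, ENNReal.ofReal (lam⁻¹ ^ (e : List A).length)}

/-- The critical parameter `λ_c(T) = 1 / br(T)`. -/
noncomputable def lambdaC (T : RTree A) : ℝ := 1 / T.br

/-- Spherically symmetric tree: the degree of a vertex depends only on its generation. -/
def SphSymm (T : RTree A) : Prop :=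
  ∀ v ∈ T.mem, ∀ w ∈ T.mem, v.length = w.length → T.numChildren v = T.numChildren w

/-- Uniformly transient tree. -/
def UniformlyTransient (T : RTree A) : Prop :=
  ∀ lam : ℝ, T.lambdaC < lam → ∃ α > (0 : ℝ), ∀ v ∈ T.mem, α ≤ (T.subtree v).escProb lam

/-- Weakly uniformly transient tree. -/
def WeaklyUniformlyTransient (T : RTree A) : Prop :=
  ∃ c : ℕ → Set (List A),
    (∀ n, T.IsVCutset (c n) ∧ (c n).Finite) ∧
    (Pairwise fun i j => Disjoint (c i) (c j)) ∧
    ∀ lam : ℝ, T.lambdaC < lam → ∃ α > (0 : ℝ), ∀ n, ∀ v ∈ c n, α ≤ (T.subtree v).escProb lam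

/-- Vertices of the periodic tree `T^{∞,F}` obtained by repeatedly grafting a copy of
the finite tree `F` at every leaf: a word belongs to it iff it is a concatenation of
root-to-leaf words of `F` followed by a word of `F`. -/
inductive GraftMem (F : RTree A) : List A → Prop
  | base (v : List A) (hv : v ∈ F.mem) : GraftMem F v
  | graft (v w : List A) (hv : v ∈ F.mem) (hne : v ≠ []) (hleaf : F.numChildren v = 0)
      (hw : GraftMem F w) : GraftMem F (v ++ w)

/-- The periodic tree `T^{∞,F}`. -/
def periodicTree (F : RTree A) : RTree A where
  mem := {l | GraftMem F l}
  root_mem := GraftMem.base [] F.root_mem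
  parent_mem := by
    have H : ∀ l, GraftMem F l → ∀ (v : List A) (a : A), l = v ++ [a] → GraftMem F v := by
      intro l hl
      induction hl with
      | base v hv =>
          intro u a h
          subst h
          exact GraftMem.base u (F.parent_mem u a hv)
      | graft v w hv hne hleaf hw ih =>
          intro u a h
          rcases w.eq_nil_or_concat' with hwnil | ⟨w', b, hww⟩
          · subst hwnil
            rw [List.append_nil] at h
            subst h
            exact GraftMem.base u (F.parent_mem u a hv)
          · subst hww
            rw [← List.append_assoc] at h
            have h2 := congrArg List.dropLast h
            simp only [List.dropLast_concat] at h2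
            subst h2
            exact GraftMem.graft v w' hv hne hleaf (ih w' b rfl)
    exact fun v a hva => H (v ++ [a]) hva v a rfl

end RTree

/-- The class `A_m` of infinite, locally finite, spherically symmetric rooted trees
all of whose vertices have degree at most `m`. -/
def MemAm (m : ℕ) (T : RTree ℕ) : Prop :=
  T.mem.Infinite ∧ T.LocFin ∧ T.SphSymm ∧ ∀ v ∈ T.mem, T.degree v ≤ m

/-- The set `F_m` of effective-conductance functions of trees in `A_m`. -/
def Fm (m : ℕ) : Set (ℝ → ℝ) :=
  {f | ContinuousOn f (Set.Icc 0 1) ∧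
    ∃ T : RTree ℕ, MemAm m T ∧ ∀ lam ∈ Set.Ioc (0 : ℝ) 1, f lam = T.conductance lam}

namespace SAW

/-- Nearest-neighbour adjacency on `ℤ²`. -/
def Adj (x y : ℤ × ℤ) : Prop :=
  (x.1 = y.1 ∧ (x.2 = y.2 + 1 ∨ x.2 + 1 = y.2)) ∨
  (x.2 = y.2 ∧ (x.1 = y.1 + 1 ∨ x.1 + 1 = y.1))

/-- `l` is the list of successive positions, after the origin, of a self-avoiding
walk starting at the origin and staying in the region `S`. -/
def SAWIn (S : Set (ℤ × ℤ)) (l : List (ℤ × ℤ)) : Prop :=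
  List.Chain' Adj ((0, 0) :: l) ∧ ((0, 0) :: l).Nodup ∧ ∀ p ∈ l, p ∈ S

/-- The self-avoiding tree of the region `S`: its vertices are the finite
self-avoiding walks in `S` starting at the origin, two walks being adjacent when
one is a one-step extension of the other. -/
def sawTree (S : Set (ℤ × ℤ)) : RTree (ℤ × ℤ) where
  mem := {l | SAWIn S l}
  root_mem := by exact ⟨List.isChain_singleton _, List.nodup_singleton _, by simp⟩
  parent_mem := by
    intro v a hv
    obtain ⟨h1, h2, h3⟩ := hv
    have hpre : ((0, 0) :: v) <+: ((0, 0) :: (v ++ [a])) := ⟨[a], by simp⟩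
    refine ⟨?_, h2.sublist hpre.sublist, fun p hp => h3 p (by simp [hp])⟩
    have h1' : (((0, 0) :: v) ++ [a]).Chain' Adj := by simpa using h1
    exact (List.isChain_append.mp h1').1

/-- The upper half-plane `ℍ = ℤ × ℤ_{≥0}`. -/
def HH : Set (ℤ × ℤ) := {z | 0 ≤ z.2}

/-- The quadrant `ℚ = ℤ_{≥0} × ℤ_{≥0}`. -/
def QQ : Set (ℤ × ℤ) := {z | 0 ≤ z.1 ∧ 0 ≤ z.2}

/-- Number of self-avoiding walks of length `n` in `ℤ²` starting at the origin. -/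
noncomputable def cSAW (n : ℕ) : ℕ :=
  {l : List (ℤ × ℤ) | l.length = n ∧ SAWIn Set.univ l}.ncard

/-- The connective constant `μ = lim cₙ^{1/n}` of `ℤ²`; by Fekete's subadditive lemma
the limit exists and equals the infimum over `n ≥ 1` of `cₙ^{1/n}`. -/
noncomputable def mu : ℝ := ⨅ n : ℕ, (cSAW (n + 1) : ℝ) ^ (((n : ℝ) + 1)⁻¹)

/-- Endpoint in `ℤ²` of the finite self-avoiding walk recorded by `l`. -/
def endpt (l : List (ℤ × ℤ)) : ℤ × ℤ := l.getLast?.getD (0, 0)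

/-- `l` is a bridge of the horizontal strip `{z : 0 ≤ Im z ≤ ℓ}`: a self-avoiding
walk of the strip starting at the origin with `γ₁(0) < γ₁(i) ≤ γ₁(n)` for `1 ≤ i ≤ n`. -/
def IsStripBridge (width : ℕ) (l : List (ℤ × ℤ)) : Prop :=
  SAWIn {z : ℤ × ℤ | 0 ≤ z.2 ∧ z.2 ≤ (width : ℤ)} l ∧
  ∀ p ∈ l, 0 < p.1 ∧ p.1 ≤ (endpt l).1

/-- `p^{(ℓ)}_n`, the number of `n`-step bridges of the strip of width `ℓ`. -/
noncomputable def stripBridgeCount (width n : ℕ) : ℕ :=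
  {l : List (ℤ × ℤ) | l.length = n ∧ IsStripBridge width l}.ncard

end SAW

/-!
Let `E(λ)` be the escape probability from the root. If every subtree has escape probability at
least `α`, then a vertex `x` with `k ≥ 1` children reaches its parent with probability
`1 / (1 + kλE_x) ≤ b := 1 - λα/(1+λ)`, so a walk at depth `L` ever returns to the root with
probability at most `b ^ L`. Every step moves away from the root with probability at least
`λ/(1+λ)`, so the walk leaves each ball almost surely. Hence, averaging over the children `c` of
the root, `E(λ)` lies within `b ^ L` of the average of the probabilities that the walk from `c`
reaches depth `L` before the root, and these are given by the effective-conductance recursion on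
the ball: continuous and nondecreasing in `λ`. The squeeze first makes `E` nondecreasing on
`(λ_c, ∞)`, so that the `α` of uniform transience at some `λ₀ > λ_c` serves for all `λ ≥ λ₀`;
then the approximation is uniform on `(λ₀, ∞)`, and `E` and `C(·, T)` are continuous there.
-/

namespace RTree

variable {A : Type*}

section Neighbors

variable (T : RTree A) (hlf : T.LocFin)

include hlf in
theorem finite_setOf_append_mem (x : List A) : {a : A | x ++ [a] ∈ T.mem}.Finite := by
  by_cases hx : x ∈ T.mem
  · exact hlf x hx
  · exact Set.finite_empty.subset fun a ha => hx (T.parent_mem x a ha)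

noncomputable def children (x : List A) : Finset (List A) :=
  (T.finite_setOf_append_mem hlf x).toFinset.image (x ++ [·])

theorem mem_children {x y : List A} :
    y ∈ T.children hlf x ↔ y ∈ T.mem ∧ ∃ a, y = x ++ [a] := by
  simp only [children, Finset.mem_image, Set.Finite.mem_toFinset, Set.mem_ofPred_eq]
  constructor
  · rintro ⟨a, ha, rfl⟩
    exact ⟨ha, a, rfl⟩
  · rintro ⟨hy, a, rfl⟩
    exact ⟨a, hy, rfl⟩

theorem card_children (x : List A) : (T.children hlf x).card = T.numChildren x := by
  rw [children, Finset.card_image_of_injective _ fun a b h => by simpa using h, numChildren,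
    Set.ncard_eq_toFinset_card _ (T.finite_setOf_append_mem hlf x)]

variable {T hlf} {x y : List A}

theorem mem_of_mem_children (hy : y ∈ T.children hlf x) : y ∈ T.mem :=
  ((T.mem_children hlf).1 hy).1

theorem dropLast_of_mem_children (hy : y ∈ T.children hlf x) : y.dropLast = x := by
  obtain ⟨-, a, rfl⟩ := (T.mem_children hlf).1 hy
  simp

theorem length_of_mem_children (hy : y ∈ T.children hlf x) : y.length = x.length + 1 := by
  obtain ⟨-, a, rfl⟩ := (T.mem_children hlf).1 hy
  simp

theorem prefix_of_mem_children (hy : y ∈ T.children hlf x) : x <+: y := by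
  obtain ⟨-, a, rfl⟩ := (T.mem_children hlf).1 hy
  exact x.prefix_append [a]

theorem ne_nil_of_mem_children (hy : y ∈ T.children hlf x) : y ≠ [] := by
  obtain ⟨-, a, rfl⟩ := (T.mem_children hlf).1 hy
  simp

theorem dropLast_notMem_children : x.dropLast ∉ T.children hlf x := fun h => by
  have := length_of_mem_children h
  rw [List.length_dropLast] at this
  omega

theorem children_eq_empty_iff : T.children hlf x = ∅ ↔ T.numChildren x = 0 := by
  rw [← Finset.card_eq_zero, card_children]

variable (T hlf x)

noncomputable def neighbors : Finset (List A) :=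
  if x = [] then T.children hlf x else insert x.dropLast (T.children hlf x)

variable {T hlf x}

theorem neighbors_nil : T.neighbors hlf [] = T.children hlf [] := if_pos rfl

theorem children_subset_neighbors : T.children hlf x ⊆ T.neighbors hlf x := by
  unfold neighbors
  split_ifs
  exacts [subset_rfl, Finset.subset_insert _ _]

theorem sum_neighbors_of_ne_nil (hx : x ≠ []) (f : List A → ℝ) :
    ∑ y ∈ T.neighbors hlf x, f y = f x.dropLast + ∑ y ∈ T.children hlf x, f y := by
  rw [neighbors, if_neg hx, Finset.sum_insert dropLast_notMem_children]

theorem mem_neighbors :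
    y ∈ T.neighbors hlf x ↔ y ∈ T.children hlf x ∨ x ≠ [] ∧ y = x.dropLast := by
  unfold neighbors
  split_ifs with hx <;> simp [hx, or_comm]

theorem mem_of_mem_neighbors (hx : x ∈ T.mem) (hy : y ∈ T.neighbors hlf x) : y ∈ T.mem := by
  rcases mem_neighbors.1 hy with hy | ⟨hx0, rfl⟩
  · exact mem_of_mem_children hy
  · obtain ⟨w, a, rfl⟩ := x.eq_nil_or_concat'.resolve_left hx0
    simpa using T.parent_mem w a hx

theorem prefix_of_mem_neighbors {v : List A} (hv : v <+: x) (hvx : v ≠ x)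
    (hy : y ∈ T.neighbors hlf x) : v <+: y := by
  rcases mem_neighbors.1 hy with hy | ⟨-, rfl⟩
  · exact hv.trans (prefix_of_mem_children hy)
  · obtain ⟨r, rfl⟩ := hv
    have hr : r ≠ [] := by rintro rfl; simp at hvx
    rw [List.dropLast_append_of_ne_nil hr]
    exact v.prefix_append _

theorem notMem_singleton_dropLast {v : List A} (hv : v ≠ []) (hx : v <+: x) :
    x ∉ ({v.dropLast} : Set (List A)) := fun h => by
  have := hx.length_le
  rw [Set.mem_singleton_iff.1 h, List.length_dropLast] at this
  exact hv (List.length_eq_zero_iff.1 (by omega))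

theorem prefix_mem_union {v : List A} {S : Set (List A)} (hx : v <+: x) :
    x ∈ {z | v <+: z ∧ z ∉ S} ∪ S := by
  by_cases h : x ∈ S
  exacts [Or.inr h, Or.inl ⟨hx, h⟩]

/-- Until it is stopped in `S ∋ v`, a walk started in the subtree of `v` stays there. -/
theorem mem_neighbors_prefix_mem_union {v : List A} {S : Set (List A)} (hv : v ∈ S)
    (hx : x ∈ {z | v <+: z ∧ z ∉ S}) (hy : y ∈ T.neighbors hlf x) :
    y ∈ {z | v <+: z ∧ z ∉ S} ∪ S :=
  prefix_mem_union (prefix_of_mem_neighbors hx.1 (ne_of_mem_of_not_mem hv hx.2) hy)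

end Neighbors

section Step

variable {T : RTree A} {hlf : T.LocFin} {lam : ℝ} {x y : List A}

theorem step_nonneg (hlam : 0 ≤ lam) (x y : List A) : 0 ≤ T.step lam x y := by
  unfold step
  split_ifs <;> positivity

theorem step_child (hx : x ≠ []) (hy : y ∈ T.children hlf x) :
    T.step lam x y = lam / (1 + T.numChildren x * lam) := by
  obtain ⟨hym, a, rfl⟩ := (T.mem_children hlf).1 hy
  rw [step, if_pos ⟨T.parent_mem x a hym, hym⟩, if_pos ⟨a, rfl⟩, if_neg hx]

theorem step_child_nil (hy : y ∈ T.children hlf []) :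
    T.step lam [] y = (T.numChildren [] : ℝ)⁻¹ := by
  obtain ⟨hym, he⟩ := (T.mem_children hlf).1 hy
  rw [step, if_pos ⟨T.root_mem, hym⟩, if_pos he, if_pos rfl, one_div]

theorem step_parent (hx : x ≠ []) (hxm : x ∈ T.mem) :
    T.step lam x x.dropLast = 1 / (1 + T.numChildren x * lam) := by
  obtain ⟨w, a, rfl⟩ := x.eq_nil_or_concat'.resolve_left hx
  have hne : ¬∃ b : A, w = w ++ [a] ++ [b] := fun ⟨b, h⟩ => by
    simpa using congrArg List.length h
  rw [List.dropLast_concat, step, if_pos ⟨hxm, T.parent_mem w a hxm⟩, if_neg hne,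
    if_pos ⟨hx, by simp⟩]

theorem mem_neighbors_of_step_ne_zero (h : T.step lam x y ≠ 0) :
    x ∈ T.mem ∧ y ∈ T.neighbors hlf x := by
  unfold step at h
  split_ifs at h with h1 h2 h3 h4
  · exact ⟨h1.1, mem_neighbors.2 (Or.inl ((T.mem_children hlf).2 ⟨h1.2, h2⟩))⟩
  · exact ⟨h1.1, mem_neighbors.2 (Or.inl ((T.mem_children hlf).2 ⟨h1.2, h2⟩))⟩
  · exact ⟨h1.1, mem_neighbors.2 (Or.inr h4)⟩
  all_goals exact absurd rfl h

theorem sum_step_neighbors_of_ne_nil (hlam : 0 ≤ lam) (hx : x ≠ []) (hxm : x ∈ T.mem) :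
    ∑ y ∈ T.neighbors hlf x, T.step lam x y = 1 := by
  have hpos : 0 < 1 + T.numChildren x * lam := by positivity
  rw [sum_neighbors_of_ne_nil hx, step_parent hx hxm,
    Finset.sum_congr rfl fun y hy => step_child hx hy, Finset.sum_const, card_children,
    nsmul_eq_mul]
  field_simp

theorem sum_step_neighbors_nil (hroot : T.numChildren [] ≠ 0) :
    ∑ y ∈ T.neighbors hlf [], T.step lam [] y = 1 := by
  rw [neighbors_nil, Finset.sum_congr rfl fun y hy => step_child_nil hy, Finset.sum_const,
    card_children, nsmul_eq_mul, mul_inv_cancel₀ (by exact_mod_cast hroot)]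

theorem sum_step_neighbors (hlam : 0 ≤ lam) (hroot : T.numChildren [] ≠ 0) (hxm : x ∈ T.mem) :
    ∑ y ∈ T.neighbors hlf x, T.step lam x y = 1 := by
  rcases eq_or_ne x [] with rfl | hx
  · exact sum_step_neighbors_nil hroot
  · exact sum_step_neighbors_of_ne_nil hlam hx hxm

theorem sum_step_neighbors_le_one (hlam : 0 ≤ lam) (x : List A) :
    ∑ y ∈ T.neighbors hlf x, T.step lam x y ≤ 1 := by
  by_cases hxm : x ∈ T.mem
  · rcases eq_or_ne x [] with rfl | hx
    · by_cases hroot : T.numChildren [] = 0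
      · rw [neighbors_nil, children_eq_empty_iff.2 hroot, Finset.sum_empty]
        exact zero_le_one
      · exact (sum_step_neighbors_nil hroot).le
    · exact (sum_step_neighbors_of_ne_nil hlam hx hxm).le
  · rw [Finset.sum_eq_zero fun y _ =>
      not_not.1 fun h => hxm (mem_neighbors_of_step_ne_zero (hlf := hlf) h).1]
    exact zero_le_one

theorem div_one_add_le_sum_step_children (hlam : 0 < lam) (hk : T.numChildren x ≠ 0) :
    lam / (1 + lam) ≤ ∑ y ∈ T.children hlf x, T.step lam x y := by
  have hk1 : (1 : ℝ) ≤ T.numChildren x := by exact_mod_cast Nat.one_le_iff_ne_zero.2 hk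
  rcases eq_or_ne x [] with rfl | hx
  · rw [← neighbors_nil, sum_step_neighbors_nil hk, div_le_one (by linarith)]
    linarith
  · rw [Finset.sum_congr rfl fun y hy => step_child hx hy, Finset.sum_const, card_children,
      nsmul_eq_mul, mul_div_assoc', div_le_div_iff₀ (by linarith) (by positivity)]
    nlinarith

end Step

section StoppedWalk

variable (T : RTree A) (hlf : T.LocFin) (lam : ℝ)

/-- `stoppedExpect lam B f t x` is the expected payoff of the walk started at `x` and stopped at
the first vertex `z` with `B z = some c`, which pays `c`; a walk not stopped by time `t` pays
`f` of its position at time `t`. -/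
noncomputable def stoppedExpect (B : List A → Option ℝ) (f : List A → ℝ) : ℕ → List A → ℝ
  | 0, x => (B x).getD (f x)
  | t + 1, x =>
    (B x).getD (∑ y ∈ T.neighbors hlf x, T.step lam x y * stoppedExpect B f t y)

variable {T hlf lam} {B : List A → Option ℝ} {f g : List A → ℝ} {x : List A}

theorem stoppedExpect_of_eq_some {c : ℝ} (h : B x = some c) (t : ℕ) :
    T.stoppedExpect hlf lam B f t x = c := by
  cases t <;> simp [stoppedExpect, h]

theorem stoppedExpect_zero_of_eq_none (h : B x = none) :
    T.stoppedExpect hlf lam B f 0 x = f x := by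
  simp [stoppedExpect, h]

theorem stoppedExpect_succ_of_eq_none (h : B x = none) (t : ℕ) :
    T.stoppedExpect hlf lam B f (t + 1) x =
      ∑ y ∈ T.neighbors hlf x, T.step lam x y * T.stoppedExpect hlf lam B f t y := by
  simp [stoppedExpect, h]

/-- The Markov property at time `t`. -/
theorem stoppedExpect_add (s t : ℕ) (x : List A) :
    T.stoppedExpect hlf lam B f (s + t) x =
      T.stoppedExpect hlf lam B (T.stoppedExpect hlf lam B f t) s x := by
  induction s generalizing x with
  | zero =>
    cases h : B x with
    | none => rw [Nat.zero_add, stoppedExpect_zero_of_eq_none h]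
    | some c => rw [stoppedExpect_of_eq_some h, stoppedExpect_of_eq_some h]
  | succ s ih =>
    cases h : B x with
    | none =>
      rw [Nat.add_right_comm, stoppedExpect_succ_of_eq_none h, stoppedExpect_succ_of_eq_none h]
      simp only [ih]
    | some c => rw [stoppedExpect_of_eq_some h, stoppedExpect_of_eq_some h]

theorem stoppedExpect_mono (hlam : 0 ≤ lam) (hfg : ∀ x, f x ≤ g x) (t : ℕ) (x : List A) :
    T.stoppedExpect hlf lam B f t x ≤ T.stoppedExpect hlf lam B g t x := by
  induction t generalizing x with
  | zero =>
    cases h : B x with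
    | none => simpa [stoppedExpect_zero_of_eq_none h] using hfg x
    | some c => rw [stoppedExpect_of_eq_some h, stoppedExpect_of_eq_some h]
  | succ t ih =>
    cases h : B x with
    | none =>
      rw [stoppedExpect_succ_of_eq_none h, stoppedExpect_succ_of_eq_none h]
      exact Finset.sum_le_sum fun y _ => mul_le_mul_of_nonneg_left (ih y) (step_nonneg hlam x y)
    | some c => rw [stoppedExpect_of_eq_some h, stoppedExpect_of_eq_some h]

theorem stoppedExpect_const_mul (hB : ∀ x c, B x = some c → c = 0) (r : ℝ) (t : ℕ)
    (x : List A) :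
    T.stoppedExpect hlf lam B (fun y => r * f y) t x = r * T.stoppedExpect hlf lam B f t x := by
  induction t generalizing x with
  | zero =>
    cases h : B x with
    | none => simp only [stoppedExpect_zero_of_eq_none h]
    | some c => rw [stoppedExpect_of_eq_some h, stoppedExpect_of_eq_some h, hB x c h, mul_zero]
  | succ t ih =>
    cases h : B x with
    | none =>
      rw [stoppedExpect_succ_of_eq_none h, stoppedExpect_succ_of_eq_none h, Finset.mul_sum]
      exact Finset.sum_congr rfl fun y _ => by rw [ih y]; ring
    | some c => rw [stoppedExpect_of_eq_some h, stoppedExpect_of_eq_some h, hB x c h, mul_zero]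

theorem stoppedExpect_mem_Icc (hlam : 0 ≤ lam) (hB : ∀ x c, B x = some c → c ∈ Set.Icc 0 1)
    (hf : ∀ x, f x ∈ Set.Icc 0 1) (t : ℕ) (x : List A) :
    T.stoppedExpect hlf lam B f t x ∈ Set.Icc 0 1 := by
  induction t generalizing x with
  | zero =>
    cases h : B x with
    | none => simpa [stoppedExpect_zero_of_eq_none h] using hf x
    | some c => rw [stoppedExpect_of_eq_some h]; exact hB x c h
  | succ t ih =>
    cases h : B x with
    | none =>
      rw [stoppedExpect_succ_of_eq_none h]
      refine ⟨Finset.sum_nonneg fun y _ => mul_nonneg (step_nonneg hlam x y) (ih y).1, ?_⟩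
      calc ∑ y ∈ T.neighbors hlf x, T.step lam x y * T.stoppedExpect hlf lam B f t y
          ≤ ∑ y ∈ T.neighbors hlf x, T.step lam x y :=
            Finset.sum_le_sum fun y _ => mul_le_of_le_one_right (step_nonneg hlam x y) (ih y).2
        _ ≤ 1 := sum_step_neighbors_le_one hlam x
    | some c => rw [stoppedExpect_of_eq_some h]; exact hB x c h

end StoppedWalk

section Harmonic

variable {T : RTree A} {hlf : T.LocFin} {lam : ℝ} {W : ℕ → List A → ℝ} {h : List A → ℝ}
  {R S : Set (List A)}

/-- Comparison principle: a process that follows the walk on `R` until it leaves `R` for `S`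
is dominated on `R ∪ S` by a function that is superharmonic on `R` and dominates it on `S`. -/
theorem le_of_superharmonic (hlam : 0 ≤ lam) (hS : ∀ x ∈ S, ∀ t, W t x ≤ h x)
    (h0 : ∀ x ∈ R, W 0 x ≤ h x)
    (hW : ∀ x ∈ R, ∀ t, W (t + 1) x ≤ ∑ y ∈ T.neighbors hlf x, T.step lam x y * W t y)
    (hh : ∀ x ∈ R, ∑ y ∈ T.neighbors hlf x, T.step lam x y * h y ≤ h x)
    (hRS : ∀ x ∈ R, ∀ y ∈ T.neighbors hlf x, y ∈ R ∪ S) :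
    ∀ t, ∀ x ∈ R ∪ S, W t x ≤ h x := by
  intro t
  induction t with
  | zero => rintro x (hx | hx); exacts [h0 x hx, hS x hx 0]
  | succ t ih =>
    rintro x (hx | hx)
    · calc W (t + 1) x ≤ ∑ y ∈ T.neighbors hlf x, T.step lam x y * W t y := hW x hx t
        _ ≤ ∑ y ∈ T.neighbors hlf x, T.step lam x y * h y := Finset.sum_le_sum fun y hy =>
            mul_le_mul_of_nonneg_left (ih y (hRS x hx y hy)) (step_nonneg hlam x y)
        _ ≤ h x := hh x hx
    · exact hS x hx _

theorem le_of_subharmonic (hlam : 0 ≤ lam) (hS : ∀ x ∈ S, ∀ t, h x ≤ W t x)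
    (h0 : ∀ x ∈ R, h x ≤ W 0 x)
    (hW : ∀ x ∈ R, ∀ t, ∑ y ∈ T.neighbors hlf x, T.step lam x y * W t y ≤ W (t + 1) x)
    (hh : ∀ x ∈ R, h x ≤ ∑ y ∈ T.neighbors hlf x, T.step lam x y * h y)
    (hRS : ∀ x ∈ R, ∀ y ∈ T.neighbors hlf x, y ∈ R ∪ S) :
    ∀ t, ∀ x ∈ R ∪ S, h x ≤ W t x := by
  intro t
  induction t with
  | zero => rintro x (hx | hx); exacts [h0 x hx, hS x hx 0]
  | succ t ih =>
    rintro x (hx | hx)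
    · calc h x ≤ ∑ y ∈ T.neighbors hlf x, T.step lam x y * h y := hh x hx
        _ ≤ ∑ y ∈ T.neighbors hlf x, T.step lam x y * W t y := Finset.sum_le_sum fun y hy =>
            mul_le_mul_of_nonneg_left (ih y (hRS x hx y hy)) (step_nonneg hlam x y)
        _ ≤ W (t + 1) x := hW x hx t
    · exact hS x hx _

theorem eq_of_harmonic (hlam : 0 ≤ lam) (hS : ∀ x ∈ S, ∀ t, W t x = h x)
    (h0 : ∀ x ∈ R, W 0 x = h x)
    (hW : ∀ x ∈ R, ∀ t, W (t + 1) x = ∑ y ∈ T.neighbors hlf x, T.step lam x y * W t y)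
    (hh : ∀ x ∈ R, ∑ y ∈ T.neighbors hlf x, T.step lam x y * h y = h x)
    (hRS : ∀ x ∈ R, ∀ y ∈ T.neighbors hlf x, y ∈ R ∪ S) (t : ℕ) {x : List A} (hx : x ∈ R ∪ S) :
    W t x = h x :=
  le_antisymm
    (le_of_superharmonic hlam (fun x hx t => (hS x hx t).le) (fun x hx => (h0 x hx).le)
      (fun x hx t => (hW x hx t).le) (fun x hx => (hh x hx).le) hRS t x hx)
    (le_of_subharmonic hlam (fun x hx t => (hS x hx t).ge) (fun x hx => (h0 x hx).ge)
      (fun x hx t => (hW x hx t).ge) (fun x hx => (hh x hx).ge) hRS t x hx)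

end Harmonic

section Hitting

variable (T : RTree A) (hlf : T.LocFin) (lam : ℝ)

noncomputable def hitData (U V : Set (List A)) (y : List A) : Option ℝ :=
  if y ∈ U then some 1 else if y ∈ V then some 0 else none

noncomputable def killData (K : Set (List A)) (y : List A) : Option ℝ :=
  if y ∈ K then some 0 else none

/-- Probability that the walk from `x` enters `U` within `t` steps, and before entering `V`. -/
noncomputable def hitWithin (U V : Set (List A)) : ℕ → List A → ℝ :=
  T.stoppedExpect hlf lam (hitData U V) 0

noncomputable def hitProb (U V : Set (List A)) (x : List A) : ℝ :=
  ⨆ t, T.hitWithin hlf lam U V t x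

/-- Probability that the walk from `x` stays outside the killing set `K` up to time `t`. -/
noncomputable def surviveWithin (K : Set (List A)) : ℕ → List A → ℝ :=
  T.stoppedExpect hlf lam (killData K) 1

noncomputable def surviveProb (K : Set (List A)) (x : List A) : ℝ :=
  ⨅ t, T.surviveWithin hlf lam K t x

variable {T hlf lam} {U V K : Set (List A)} {x : List A}

theorem hitWithin_of_mem (hx : x ∈ U) (t : ℕ) : T.hitWithin hlf lam U V t x = 1 :=
  stoppedExpect_of_eq_some (if_pos hx) t

theorem hitWithin_of_mem_right (hxU : x ∉ U) (hxV : x ∈ V) (t : ℕ) :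
    T.hitWithin hlf lam U V t x = 0 :=
  stoppedExpect_of_eq_some (by rw [hitData, if_neg hxU, if_pos hxV]) t

theorem hitWithin_zero (hxU : x ∉ U) (hxV : x ∉ V) : T.hitWithin hlf lam U V 0 x = 0 :=
  stoppedExpect_zero_of_eq_none (by rw [hitData, if_neg hxU, if_neg hxV])

theorem hitWithin_succ (hxU : x ∉ U) (hxV : x ∉ V) (t : ℕ) :
    T.hitWithin hlf lam U V (t + 1) x =
      ∑ y ∈ T.neighbors hlf x, T.step lam x y * T.hitWithin hlf lam U V t y :=
  stoppedExpect_succ_of_eq_none (by rw [hitData, if_neg hxU, if_neg hxV]) t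

theorem hitWithin_mem_Icc (hlam : 0 ≤ lam) (t : ℕ) (x : List A) :
    T.hitWithin hlf lam U V t x ∈ Set.Icc 0 1 :=
  stoppedExpect_mem_Icc hlam (fun x c h => by
    unfold hitData at h
    split_ifs at h <;> cases h <;> norm_num) (fun _ => by norm_num) t x

theorem monotone_hitWithin (hlam : 0 ≤ lam) (x : List A) :
    Monotone fun t => T.hitWithin hlf lam U V t x := by
  refine monotone_nat_of_le_succ fun t => ?_
  simp only [hitWithin]
  rw [stoppedExpect_add t 1]
  exact stoppedExpect_mono hlam (fun y => (hitWithin_mem_Icc hlam 1 y).1) t x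

theorem bddAbove_range_hitWithin (hlam : 0 ≤ lam) (x : List A) :
    BddAbove (Set.range fun t => T.hitWithin hlf lam U V t x) :=
  ⟨1, Set.forall_mem_range.2 fun t => (hitWithin_mem_Icc hlam t x).2⟩

theorem hitWithin_le_hitProb (hlam : 0 ≤ lam) (t : ℕ) (x : List A) :
    T.hitWithin hlf lam U V t x ≤ T.hitProb hlf lam U V x :=
  le_ciSup (bddAbove_range_hitWithin hlam x) t

theorem hitProb_le {c : ℝ} (h : ∀ t, T.hitWithin hlf lam U V t x ≤ c) :
    T.hitProb hlf lam U V x ≤ c :=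
  ciSup_le h

theorem hitProb_nonneg (hlam : 0 ≤ lam) (x : List A) : 0 ≤ T.hitProb hlf lam U V x :=
  (hitWithin_mem_Icc hlam 0 x).1.trans (hitWithin_le_hitProb hlam 0 x)

theorem hitProb_le_one (hlam : 0 ≤ lam) (x : List A) : T.hitProb hlf lam U V x ≤ 1 :=
  hitProb_le fun t => (hitWithin_mem_Icc hlam t x).2

theorem hitProb_of_mem (hx : x ∈ U) : T.hitProb hlf lam U V x = 1 := by
  simp only [hitProb, hitWithin_of_mem hx, ciSup_const]

theorem hitProb_of_mem_right (hxU : x ∉ U) (hxV : x ∈ V) : T.hitProb hlf lam U V x = 0 := by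
  simp only [hitProb, hitWithin_of_mem_right hxU hxV, ciSup_const]

theorem tendsto_hitWithin (hlam : 0 ≤ lam) (x : List A) :
    Tendsto (fun t => T.hitWithin hlf lam U V t x) atTop (nhds (T.hitProb hlf lam U V x)) :=
  tendsto_atTop_ciSup (monotone_hitWithin hlam x) (bddAbove_range_hitWithin hlam x)

theorem hitProb_eq_sum (hlam : 0 ≤ lam) (hxU : x ∉ U) (hxV : x ∉ V) :
    T.hitProb hlf lam U V x =
      ∑ y ∈ T.neighbors hlf x, T.step lam x y * T.hitProb hlf lam U V y := by
  refine tendsto_nhds_unique ((tendsto_add_atTop_iff_nat 1).2 (tendsto_hitWithin hlam x)) ?_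
  simp only [hitWithin_succ hxU hxV]
  exact tendsto_finsetSum _ fun y _ => (tendsto_hitWithin hlam y).const_mul _

theorem hitProb_mul_one_add_eq (hlam : 0 ≤ lam) (hx0 : x ≠ []) (hxm : x ∈ T.mem) (hxU : x ∉ U)
    (hxV : x ∉ V) :
    T.hitProb hlf lam U V x * (1 + T.numChildren x * lam) =
      T.hitProb hlf lam U V x.dropLast + lam * ∑ c ∈ T.children hlf x, T.hitProb hlf lam U V c := by
  have hpos : 0 < 1 + T.numChildren x * lam := by positivity
  rw [hitProb_eq_sum hlam hxU hxV, sum_neighbors_of_ne_nil hx0, step_parent hx0 hxm,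
    Finset.sum_congr rfl fun c hc => by rw [step_child hx0 hc], ← Finset.mul_sum]
  field_simp

theorem surviveWithin_of_mem (hx : x ∈ K) (t : ℕ) : T.surviveWithin hlf lam K t x = 0 :=
  stoppedExpect_of_eq_some (if_pos hx) t

theorem surviveWithin_zero (hx : x ∉ K) : T.surviveWithin hlf lam K 0 x = 1 :=
  stoppedExpect_zero_of_eq_none (if_neg hx)

theorem surviveWithin_succ (hx : x ∉ K) (t : ℕ) :
    T.surviveWithin hlf lam K (t + 1) x =
      ∑ y ∈ T.neighbors hlf x, T.step lam x y * T.surviveWithin hlf lam K t y :=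
  stoppedExpect_succ_of_eq_none (if_neg hx) t

theorem killData_eq_some {c : ℝ} (h : killData K x = some c) : c = 0 := by
  unfold killData at h
  split_ifs at h
  exact (Option.some.inj h).symm

theorem surviveWithin_mem_Icc (hlam : 0 ≤ lam) (t : ℕ) (x : List A) :
    T.surviveWithin hlf lam K t x ∈ Set.Icc 0 1 :=
  stoppedExpect_mem_Icc hlam (fun _ _ h => by rw [killData_eq_some h]; norm_num)
    (fun _ => by norm_num) t x

theorem antitone_surviveWithin (hlam : 0 ≤ lam) (x : List A) :
    Antitone fun t => T.surviveWithin hlf lam K t x := by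
  refine antitone_nat_of_succ_le fun t => ?_
  simp only [surviveWithin]
  rw [stoppedExpect_add t 1]
  exact stoppedExpect_mono hlam (fun y => (surviveWithin_mem_Icc hlam 1 y).2) t x

theorem bddBelow_range_surviveWithin (hlam : 0 ≤ lam) (x : List A) :
    BddBelow (Set.range fun t => T.surviveWithin hlf lam K t x) :=
  ⟨0, Set.forall_mem_range.2 fun t => (surviveWithin_mem_Icc hlam t x).1⟩

theorem surviveProb_le_surviveWithin (hlam : 0 ≤ lam) (t : ℕ) (x : List A) :
    T.surviveProb hlf lam K x ≤ T.surviveWithin hlf lam K t x :=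
  ciInf_le (bddBelow_range_surviveWithin hlam x) t

theorem surviveProb_nonneg (hlam : 0 ≤ lam) (x : List A) : 0 ≤ T.surviveProb hlf lam K x :=
  le_ciInf fun t => (surviveWithin_mem_Icc hlam t x).1

theorem surviveProb_le_one (hlam : 0 ≤ lam) (x : List A) : T.surviveProb hlf lam K x ≤ 1 :=
  (surviveProb_le_surviveWithin hlam 0 x).trans (surviveWithin_mem_Icc hlam 0 x).2

theorem tendsto_surviveWithin (hlam : 0 ≤ lam) (x : List A) :
    Tendsto (fun t => T.surviveWithin hlf lam K t x) atTop (nhds (T.surviveProb hlf lam K x)) :=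
  tendsto_atTop_ciInf (antitone_surviveWithin hlam x) (bddBelow_range_surviveWithin hlam x)

end Hitting

section Conservation

variable {T : RTree A} {hlf : T.LocFin} {lam : ℝ} {U V K : Set (List A)} {x : List A}

theorem hitWithin_empty_left : ∀ (t : ℕ) (x : List A), T.hitWithin hlf lam ∅ V t x = 0
  | t, x => by
    by_cases hx : x ∈ V
    · exact hitWithin_of_mem_right (Set.notMem_empty x) hx t
    cases t with
    | zero => exact hitWithin_zero (Set.notMem_empty x) hx
    | succ t => simp [hitWithin_succ (Set.notMem_empty x) hx, hitWithin_empty_left t]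

theorem hitWithin_add_hitWithin_add_surviveWithin (hlam : 0 ≤ lam)
    (hroot : T.numChildren [] ≠ 0) (hUV : Disjoint U V) (t : ℕ) (hx : x ∈ T.mem) :
    T.hitWithin hlf lam U V t x + T.hitWithin hlf lam V U t x +
      T.surviveWithin hlf lam (U ∪ V) t x = 1 := by
  refine eq_of_harmonic (T := T) (hlf := hlf) (W := fun t x => T.hitWithin hlf lam U V t x +
      T.hitWithin hlf lam V U t x + T.surviveWithin hlf lam (U ∪ V) t x) (h := fun _ => 1)
    (R := T.mem \ (U ∪ V)) (S := T.mem ∩ (U ∪ V)) hlam ?_ ?_ ?_ ?_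
    (fun x hx y hy => by rw [Set.sdiff_union_inter]; exact mem_of_mem_neighbors hx.1 hy) t
    (by rwa [Set.sdiff_union_inter])
  · rintro x ⟨-, hxU | hxV⟩ t
    · rw [hitWithin_of_mem hxU, hitWithin_of_mem_right (Set.disjoint_left.1 hUV hxU) hxU,
        surviveWithin_of_mem (Or.inl hxU)]
      norm_num
    · rw [hitWithin_of_mem_right (Set.disjoint_right.1 hUV hxV) hxV, hitWithin_of_mem hxV,
        surviveWithin_of_mem (Or.inr hxV)]
      norm_num
  · rintro x ⟨-, hx⟩
    rw [hitWithin_zero (fun h => hx (Or.inl h)) (fun h => hx (Or.inr h)),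
      hitWithin_zero (fun h => hx (Or.inr h)) (fun h => hx (Or.inl h)), surviveWithin_zero hx]
    norm_num
  · rintro x ⟨-, hx⟩ t
    simp only [hitWithin_succ (fun h => hx (Or.inl h)) (fun h => hx (Or.inr h)),
      hitWithin_succ (fun h => hx (Or.inr h)) (fun h => hx (Or.inl h)), surviveWithin_succ hx,
      ← Finset.sum_add_distrib, mul_add]
  · rintro x ⟨hx, -⟩
    simpa using sum_step_neighbors hlam hroot hx

theorem hitWithin_add_surviveWithin (hlam : 0 ≤ lam) (hroot : T.numChildren [] ≠ 0) (t : ℕ)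
    (hx : x ∈ T.mem) : T.hitWithin hlf lam K ∅ t x + T.surviveWithin hlf lam K t x = 1 := by
  simpa [hitWithin_empty_left] using
    hitWithin_add_hitWithin_add_surviveWithin (hlf := hlf) hlam hroot (Set.disjoint_empty K) t hx

theorem hitProb_add_surviveProb (hlam : 0 ≤ lam) (hroot : T.numChildren [] ≠ 0)
    (hx : x ∈ T.mem) : T.hitProb hlf lam K ∅ x + T.surviveProb hlf lam K x = 1 :=
  tendsto_nhds_unique ((tendsto_hitWithin hlam x).add (tendsto_surviveWithin hlam x)) <| by
    simpa only [hitWithin_add_surviveWithin hlam hroot _ hx] using tendsto_const_nhds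

end Conservation

section Paths

variable (T : RTree A) (hlf : T.LocFin) (lam : ℝ)

noncomputable def walks : ℕ → List A → Finset (List (List A))
  | 0, x => {[x]}
  | n + 1, x => (T.neighbors hlf x).biUnion fun y => (walks n y).image (List.cons x)

def pathsWith (C : ℕ → List A → Prop) : Set (List (List A)) :=
  {l | ∀ (i : ℕ) (h : i < l.length), C i (l.get ⟨i, h⟩)}

variable {T hlf lam}

theorem pathProb_nonneg (hlam : 0 ≤ lam) : ∀ l, 0 ≤ T.pathProb lam l
  | [] => zero_le_one
  | [_] => zero_le_one
  | x :: y :: l => mul_nonneg (step_nonneg hlam x y) (pathProb_nonneg hlam (y :: l))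

theorem head?_length_of_mem_walks :
    ∀ {n : ℕ} {x : List A} {l : List (List A)}, l ∈ T.walks hlf n x →
      l.head? = some x ∧ l.length = n + 1
  | 0, x, l, hl => by
    rw [walks, Finset.mem_singleton] at hl
    simp [hl]
  | n + 1, x, l, hl => by
    simp only [walks, Finset.mem_biUnion, Finset.mem_image] at hl
    obtain ⟨y, -, l', hl', rfl⟩ := hl
    simp [(head?_length_of_mem_walks hl').2]

theorem mem_walks_of_pathProb_ne_zero :
    ∀ {n : ℕ} {x : List A} {l : List (List A)}, l.length = n + 1 → l.head? = some x →
      T.pathProb lam l ≠ 0 → l ∈ T.walks hlf n x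
  | 0, x, l, hlen, hhead, _ => by
    obtain ⟨v, rfl⟩ := List.length_eq_one_iff.1 hlen
    cases hhead
    simp [walks]
  | n + 1, x, x' :: y :: l, hlen, hhead, hne => by
    cases hhead
    rw [pathProb] at hne
    simp only [walks, Finset.mem_biUnion, Finset.mem_image]
    exact ⟨y, (mem_neighbors_of_step_ne_zero (left_ne_zero_of_mul hne)).2, y :: l,
      mem_walks_of_pathProb_ne_zero (by simpa using hlen) rfl (right_ne_zero_of_mul hne), rfl⟩
  | n + 1, x, [_], hlen, _, _ => by simp at hlen

theorem tsum_pathProb_eq_sum_walks (n : ℕ) (x : List A) (C : ℕ → List A → Prop) :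
    ∑' l : {l : List (List A) // l.length = n + 1 ∧ l.head? = some x ∧
        ∀ (i : ℕ) (h : i < l.length), C i (l.get ⟨i, h⟩)}, T.pathProb lam l.1 =
      ∑ l ∈ T.walks hlf n x, (pathsWith C).indicator (T.pathProb lam) l := by
  refine (tsum_subtype {l : List (List A) | l.length = n + 1 ∧ l.head? = some x ∧
    l ∈ pathsWith C} (T.pathProb lam)).trans ?_
  rw [tsum_eq_sum (s := T.walks hlf n x)]
  · refine Finset.sum_congr rfl fun l hl => ?_
    obtain ⟨hhead, hlen⟩ := head?_length_of_mem_walks hl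
    by_cases hC : l ∈ pathsWith C
    · rw [Set.indicator_of_mem hC, Set.indicator_of_mem (show l ∈ {l : List (List A) |
        l.length = n + 1 ∧ l.head? = some x ∧ l ∈ pathsWith C} from ⟨hlen, hhead, hC⟩)]
    · rw [Set.indicator_of_notMem hC, Set.indicator_of_notMem fun h => hC h.2.2]
  · intro l hl
    by_cases hm : l ∈ {l : List (List A) | l.length = n + 1 ∧ l.head? = some x ∧
        l ∈ pathsWith C}
    · rw [Set.indicator_of_mem hm]
      exact not_not.1 fun hne => hl (mem_walks_of_pathProb_ne_zero hm.1 hm.2.1 hne)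
    · exact Set.indicator_of_notMem hm _

theorem sum_walks_succ (n : ℕ) (x : List A) (C : ℕ → List A → Prop) (hC : C 0 x) :
    ∑ l ∈ T.walks hlf (n + 1) x, (pathsWith C).indicator (T.pathProb lam) l =
      ∑ y ∈ T.neighbors hlf x, T.step lam x y *
        ∑ l ∈ T.walks hlf n y, (pathsWith fun i => C (i + 1)).indicator (T.pathProb lam) l := by
  rw [walks, Finset.sum_biUnion]
  · refine Finset.sum_congr rfl fun y _ => ?_
    rw [Finset.sum_image fun _ _ _ _ h => List.cons_injective h, Finset.mul_sum]
    refine Finset.sum_congr rfl fun l hl => ?_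
    have hhead := (head?_length_of_mem_walks hl).1
    obtain ⟨l', rfl⟩ : ∃ l', l = y :: l' := by
      cases l with
      | nil => simp at hhead
      | cons z l' => cases hhead; exact ⟨l', rfl⟩
    have hiff : x :: y :: l' ∈ pathsWith C ↔ y :: l' ∈ pathsWith fun i => C (i + 1) := by
      constructor
      · intro h i hi
        simpa using h (i + 1) (by simpa using hi)
      · rintro h (_ | i) hi
        · simpa using hC
        · simpa using h i (by simpa using hi)
    by_cases hm : y :: l' ∈ pathsWith fun i => C (i + 1)
    · rw [Set.indicator_of_mem (hiff.2 hm), Set.indicator_of_mem hm, pathProb]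
    · rw [Set.indicator_of_notMem (mt hiff.1 hm), Set.indicator_of_notMem hm, mul_zero]
  · intro y _ z _ hyz
    simp only [Function.onFun, Finset.disjoint_left, Finset.mem_image]
    rintro _ ⟨l, hl, rfl⟩ ⟨l', hl', h⟩
    cases List.cons_injective h
    exact hyz (Option.some.inj <| (head?_length_of_mem_walks hl).1.symm.trans
      (head?_length_of_mem_walks hl').1)

theorem sum_walks_eq_zero {n : ℕ} {x : List A} {C : ℕ → List A → Prop} (hC : ¬C 0 x) :
    ∑ l ∈ T.walks hlf n x, (pathsWith C).indicator (T.pathProb lam) l = 0 := by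
  refine Finset.sum_eq_zero fun l hl => Set.indicator_of_notMem (fun h => hC ?_) _
  obtain ⟨hhead, hlen⟩ := head?_length_of_mem_walks hl
  cases l with
  | nil => simp at hlen
  | cons z l => cases hhead; simpa using h 0 (by simp)

theorem sum_walks_avoiding (K : Set (List A)) :
    ∀ (n : ℕ) (x : List A),
      ∑ l ∈ T.walks hlf n x, (pathsWith fun _ v => v ∉ K).indicator (T.pathProb lam) l =
        T.surviveWithin hlf lam K n x
  | n, x => by
    by_cases hx : x ∈ K
    · rw [surviveWithin_of_mem hx, sum_walks_eq_zero (not_not.2 hx)]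
    cases n with
    | zero =>
      rw [walks, Finset.sum_singleton, surviveWithin_zero hx,
        Set.indicator_of_mem (by rintro (_ | i) hi; exacts [hx, by simp at hi])]
      rfl
    | succ n =>
      rw [sum_walks_succ n x _ hx, surviveWithin_succ hx]
      exact Finset.sum_congr rfl fun y _ => by rw [sum_walks_avoiding K n y]

end Paths

section Escape

variable {T : RTree A} {hlf : T.LocFin} {lam : ℝ} {x : List A}

theorem inv_mul_sum_children_le {g : List A → ℝ} {B : ℝ} (hB : 0 ≤ B)
    (hg : ∀ y ∈ T.children hlf x, g y ≤ B) :
    (T.numChildren x : ℝ)⁻¹ * ∑ y ∈ T.children hlf x, g y ≤ B := by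
  calc (T.numChildren x : ℝ)⁻¹ * ∑ y ∈ T.children hlf x, g y
      ≤ (T.numChildren x : ℝ)⁻¹ * (T.numChildren x * B) := by
        gcongr
        simpa [card_children] using Finset.sum_le_sum hg
    _ ≤ B := by
        rw [← mul_assoc]
        exact mul_le_of_le_one_left hB inv_mul_le_one

theorem cylProb_nonneg (hlam : 0 ≤ lam) (M : ℕ) (P : ℕ → List A → Prop) :
    0 ≤ T.cylProb lam M P :=
  tsum_nonneg fun _ => pathProb_nonneg hlam _

theorem cylProb_succ (M : ℕ) :
    T.cylProb lam (M + 1) (fun i v => i ≠ 0 → v ≠ []) =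
      (T.numChildren [] : ℝ)⁻¹ * ∑ y ∈ T.children hlf [], T.surviveWithin hlf lam {[]} M y := by
  rw [cylProb, tsum_pathProb_eq_sum_walks (hlf := hlf) (M + 1) [] fun i v => i ≠ 0 → v ≠ [],
    sum_walks_succ _ _ _ fun h => absurd rfl h,
    neighbors_nil, Finset.mul_sum]
  refine Finset.sum_congr rfl fun y hy => ?_
  rw [step_child_nil hy]
  simp only [ne_eq, Nat.add_one_ne_zero, not_false_eq_true, forall_const]
  exact congrArg _ (sum_walks_avoiding {[]} M y)

theorem escProb_eq (hlam : 0 ≤ lam) :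
    T.escProb lam =
      (T.numChildren [] : ℝ)⁻¹ * ∑ y ∈ T.children hlf [], T.surviveProb hlf lam {[]} y := by
  set a : ℕ → ℝ := fun M => T.cylProb lam M fun i v => i ≠ 0 → v ≠ []
  have h0 : a 0 = 1 := by
    simp only [a]
    rw [cylProb, tsum_pathProb_eq_sum_walks (hlf := hlf) 0 [] fun i v => i ≠ 0 → v ≠ [], walks,
      Finset.sum_singleton, Set.indicator_of_mem]
    · rfl
    · rintro (_ | i) hi h
      exacts [absurd rfl h, by simp at hi]
  have hlim : Tendsto (fun M => a (M + 1)) atTop (nhds ((T.numChildren [] : ℝ)⁻¹ *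
      ∑ y ∈ T.children hlf [], T.surviveProb hlf lam {[]} y)) := by
    simp only [a, cylProb_succ (hlf := hlf)]
    exact (tendsto_finsetSum _ fun y _ => tendsto_surviveWithin hlam y).const_mul _
  have hanti : Antitone a := antitone_nat_of_succ_le fun M => by
    cases M with
    | zero =>
      rw [h0]
      simp only [a, cylProb_succ (hlf := hlf)]
      exact inv_mul_sum_children_le zero_le_one fun y _ => (surviveWithin_mem_Icc hlam 0 y).2
    | succ M =>
      simp only [a, cylProb_succ (hlf := hlf)]
      gcongr with y
      exact antitone_surviveWithin hlam y M.le_succ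
  have hbdd : BddBelow (Set.range a) :=
    ⟨0, Set.forall_mem_range.2 fun M => cylProb_nonneg hlam M _⟩
  exact tendsto_nhds_unique (tendsto_atTop_ciInf hanti hbdd) ((tendsto_add_atTop_iff_nat 1).1 hlim)

theorem escProb_le_one (hlf : T.LocFin) (hlam : 0 ≤ lam) : T.escProb lam ≤ 1 := by
  rw [escProb_eq (hlf := hlf) hlam]
  exact inv_mul_sum_children_le zero_le_one fun y _ => surviveProb_le_one hlam y

theorem numChildren_nil_ne_zero_of_escProb_pos (hlf : T.LocFin) (hlam : 0 ≤ lam)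
    (h : 0 < T.escProb lam) :
    T.numChildren [] ≠ 0 := fun h0 => by
  rw [escProb_eq (hlf := hlf) hlam, children_eq_empty_iff.2 h0, Finset.sum_empty,
    mul_zero] at h
  exact h.false

end Escape

section Subtree

variable {T : RTree A} {v x : List A}

theorem mem_subtree (hv : v ∈ T.mem) : x ∈ (T.subtree v).mem ↔ v ++ x ∈ T.mem := by
  rcases eq_or_ne x [] with rfl | hx
  · simp [subtree, hv]
  · simp [subtree, hx]

theorem setOf_append_mem_subtree :
    {a | x ++ [a] ∈ (T.subtree v).mem} = {a | v ++ x ++ [a] ∈ T.mem} := by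
  ext a
  simp [subtree, List.append_assoc]

theorem subtree_locFin (hlf : T.LocFin) (v : List A) : (T.subtree v).LocFin := fun x _ => by
  rw [setOf_append_mem_subtree]
  exact T.finite_setOf_append_mem hlf (v ++ x)

theorem subtree_numChildren (v x : List A) :
    (T.subtree v).numChildren x = T.numChildren (v ++ x) := by
  rw [numChildren, setOf_append_mem_subtree, numChildren]

theorem ext_mem {S : RTree A} (h : S.mem = T.mem) : S = T := by
  cases S
  cases T
  cases h
  rfl

theorem subtree_subtree (v w : List A) : (T.subtree v).subtree w = T.subtree (v ++ w) :=
  ext_mem <| Set.ext fun l => by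
    by_cases hl : l = [] <;> simp [subtree, hl, List.append_assoc]

theorem subtree_step (hv : v ∈ T.mem) (lam : ℝ) (hx : x ≠ []) (y : List A) :
    (T.subtree v).step lam x y = T.step lam (v ++ x) (v ++ y) := by
  have hchild : (∃ a, y = x ++ [a]) ↔ ∃ a, v ++ y = v ++ x ++ [a] := by
    simp only [List.append_assoc, List.append_cancel_left_eq]
  have hpar : y = x.dropLast ↔ v ++ y = (v ++ x).dropLast := by
    rw [List.dropLast_append_of_ne_nil hx, List.append_cancel_left_eq]
  have hvx : v ++ x ≠ [] := by simp [hx]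
  simp only [step, subtree_numChildren, mem_subtree hv, hchild, hpar, ne_eq, hx, hvx,
    not_false_eq_true, true_and]

theorem image_subtree_children (hlf : T.LocFin) (v x : List A) :
    ((T.subtree v).children (subtree_locFin hlf v) x).image (v ++ ·) =
      T.children hlf (v ++ x) := by
  ext z
  simp only [children, Finset.mem_image, Set.Finite.mem_toFinset, setOf_append_mem_subtree]
  constructor
  · rintro ⟨_, ⟨a, ha, rfl⟩, rfl⟩
    exact ⟨a, ha, by rw [List.append_assoc]⟩
  · rintro ⟨a, ha, rfl⟩
    exact ⟨x ++ [a], ⟨a, ha, rfl⟩, by rw [List.append_assoc]⟩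

theorem image_subtree_neighbors (hlf : T.LocFin) (v : List A) (hx : x ≠ []) :
    ((T.subtree v).neighbors (subtree_locFin hlf v) x).image (v ++ ·) =
      T.neighbors hlf (v ++ x) := by
  have hvx : v ++ x ≠ [] := by simp [hx]
  rw [neighbors, neighbors, if_neg hx, if_neg hvx, Finset.image_insert,
    image_subtree_children, List.dropLast_append_of_ne_nil hx]

theorem subtree_surviveWithin (hlf : T.LocFin) (hv : v ∈ T.mem) (lam : ℝ) :
    ∀ (t : ℕ) {x : List A}, x ≠ [] →
      (T.subtree v).surviveWithin (subtree_locFin hlf v) lam {[]} t x =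
        T.surviveWithin hlf lam {v} t (v ++ x)
  | t, x, hx => by
    have hx' : x ∉ ({[]} : Set (List A)) := hx
    have hvx : v ++ x ∉ ({v} : Set (List A)) := by simpa using hx
    cases t with
    | zero => rw [surviveWithin_zero hx', surviveWithin_zero hvx]
    | succ t =>
      rw [surviveWithin_succ hx', surviveWithin_succ hvx, ← image_subtree_neighbors hlf v hx,
        Finset.sum_image fun _ _ _ _ h => List.append_cancel_left h]
      refine Finset.sum_congr rfl fun y _ => ?_
      rw [subtree_step hv lam hx y]
      rcases eq_or_ne y [] with rfl | hy
      · rw [surviveWithin_of_mem (Set.mem_singleton _), surviveWithin_of_mem (by simp)]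
      · rw [subtree_surviveWithin hlf hv lam t hy]

theorem numChildren_ne_zero_of_escProb_subtree_pos (hlf : T.LocFin) {lam : ℝ} (hlam : 0 ≤ lam)
    (h : 0 < (T.subtree x).escProb lam) : T.numChildren x ≠ 0 := by
  rw [← List.append_nil x, ← subtree_numChildren]
  exact numChildren_nil_ne_zero_of_escProb_pos (subtree_locFin hlf x) hlam h

theorem escProb_subtree (hlf : T.LocFin) (hv : v ∈ T.mem) {lam : ℝ} (hlam : 0 ≤ lam) :
    (T.subtree v).escProb lam =
      (T.numChildren v : ℝ)⁻¹ * ∑ c ∈ T.children hlf v, T.surviveProb hlf lam {v} c := by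
  rw [escProb_eq (hlf := subtree_locFin hlf v) hlam, subtree_numChildren, List.append_nil,
    ← List.append_nil v, ← image_subtree_children hlf v [],
    Finset.sum_image fun _ _ _ _ h => List.append_cancel_left h, List.append_nil]
  congr 1
  refine Finset.sum_congr rfl fun c hc => ?_
  exact iInf_congr fun t => subtree_surviveWithin hlf hv lam t (ne_nil_of_mem_children hc)

theorem sum_surviveProb_children (hlf : T.LocFin) (hv : v ∈ T.mem) {lam : ℝ} (hlam : 0 ≤ lam) :
    ∑ c ∈ T.children hlf v, T.surviveProb hlf lam {v} c =
      T.numChildren v * (T.subtree v).escProb lam := by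
  rw [escProb_subtree hlf hv hlam, ← mul_assoc]
  rcases eq_or_ne (T.numChildren v) 0 with hk | hk
  · rw [children_eq_empty_iff.2 hk, Finset.sum_empty, mul_zero]
  · rw [mul_inv_cancel₀ (Nat.cast_ne_zero.2 hk), one_mul]

end Subtree

section ReturnBound

/-- Bounds the probability of ever reaching the parent from a vertex whose subtree has escape
probability at least `α` (`hitProb_parent_le`). -/
noncomputable def returnBound (lam α : ℝ) : ℝ := 1 - lam / (1 + lam) * α

variable {lam lam₀ α : ℝ}

theorem returnBound_nonneg (hlam : 0 ≤ lam) (hα : α ≤ 1) : 0 ≤ returnBound lam α := by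
  have h1 : lam / (1 + lam) ≤ 1 := (div_le_one (by positivity)).2 (by linarith)
  have h2 : 0 ≤ lam / (1 + lam) := by positivity
  unfold returnBound
  nlinarith

theorem returnBound_lt_one (hlam : 0 < lam) (hα : 0 < α) : returnBound lam α < 1 := by
  have : 0 < lam / (1 + lam) * α := by positivity
  unfold returnBound
  linarith

theorem returnBound_le_returnBound (hlam₀ : 0 ≤ lam₀) (h : lam₀ ≤ lam) (hα : 0 ≤ α) :
    returnBound lam α ≤ returnBound lam₀ α := by
  have : lam₀ / (1 + lam₀) ≤ lam / (1 + lam) := by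
    rw [div_le_div_iff₀ (by positivity) (by linarith)]
    nlinarith
  unfold returnBound
  nlinarith

theorem inv_le_returnBound {k E : ℝ} (hlam : 0 ≤ lam) (hk : 1 ≤ k) (hα : 0 ≤ α) (hαE : α ≤ E)
    (hE : E ≤ 1) : (1 + k * lam * E)⁻¹ ≤ returnBound lam α := by
  have hE0 : 0 ≤ E := hα.trans hαE
  calc (1 + k * lam * E)⁻¹ ≤ (1 + lam * E)⁻¹ := by
        gcongr
        nlinarith [mul_nonneg hlam hE0]
    _ ≤ returnBound lam α := by
        rw [returnBound, inv_le_iff_one_le_mul₀ (by positivity), div_mul_eq_mul_div, ← sub_nonneg]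
        field_simp
        nlinarith [mul_nonneg hlam (sub_nonneg.2 hαE),
          mul_nonneg (mul_nonneg hlam hlam) (mul_nonneg hE0 (sub_nonneg.2 (hαE.trans hE)))]

end ReturnBound

section ReturnToRoot

variable {T : RTree A} {hlf : T.LocFin} {lam α : ℝ} {v w x : List A}

theorem returnBound_nonneg_of_le_escProb (hlf : T.LocFin) (hlam : 0 ≤ lam)
    (hαT : ∀ v ∈ T.mem, α ≤ (T.subtree v).escProb lam) : 0 ≤ returnBound lam α :=
  returnBound_nonneg hlam ((hαT [] T.root_mem).trans (escProb_le_one (subtree_locFin hlf []) hlam))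

/-- Strong Markov property at `v`: from inside the subtree of `v`, the walk reaches a vertex
outside that subtree only through `v`. -/
theorem hitProb_le_mul_of_prefix (hlam : 0 ≤ lam) (hvw : ¬v <+: w) (hvx : v <+: x) :
    T.hitProb hlf lam {w} ∅ x ≤ T.hitProb hlf lam {v} ∅ x * T.hitProb hlf lam {w} ∅ v := by
  have hR : ∀ z, v <+: z → z ∉ ({w} : Set (List A)) := fun z hz h => hvw (h ▸ hz)
  refine hitProb_le fun t => le_of_superharmonic (T := T) (hlf := hlf)
    (W := T.hitWithin hlf lam {w} ∅) (h := fun z => T.hitProb hlf lam {v} ∅ z *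
      T.hitProb hlf lam {w} ∅ v) hlam ?_ ?_ ?_ ?_
    (fun z hz y => mem_neighbors_prefix_mem_union (Set.mem_singleton v) hz) t x
    (prefix_mem_union hvx)
  · intro z hz t
    rw [Set.mem_singleton_iff.1 hz, hitProb_of_mem (Set.mem_singleton v), one_mul]
    exact hitWithin_le_hitProb hlam t v
  · rintro z ⟨hz, -⟩
    rw [hitWithin_zero (hR z hz) (Set.notMem_empty z)]
    exact mul_nonneg (hitProb_nonneg hlam z) (hitProb_nonneg hlam v)
  · rintro z ⟨hz, -⟩ t
    exact (hitWithin_succ (hR z hz) (Set.notMem_empty z) t).le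
  · rintro z ⟨-, hzv⟩
    simp only [← mul_assoc, ← Finset.sum_mul]
    exact (congrArg (· * T.hitProb hlf lam {w} ∅ v)
      (hitProb_eq_sum hlam hzv (Set.notMem_empty z))).ge

/-- The probability of ever reaching the parent of `x` is `1 / (1 + kλE)`, where `k` is the
number of children of `x` and `E` the escape probability of its subtree; here the upper
bound. -/
theorem hitProb_parent_mul_le_one (hlam : 0 ≤ lam) (hroot : T.numChildren [] ≠ 0)
    (hx : x ∈ T.mem) (hx0 : x ≠ []) :
    T.hitProb hlf lam {x.dropLast} ∅ x *
      (1 + T.numChildren x * lam * (T.subtree x).escProb lam) ≤ 1 := by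
  have hxpx := notMem_singleton_dropLast hx0 (List.prefix_refl x)
  have hchild : ∀ c ∈ T.children hlf x, T.hitProb hlf lam {x.dropLast} ∅ c ≤
      (1 - T.surviveProb hlf lam {x} c) * T.hitProb hlf lam {x.dropLast} ∅ x := fun c hc => by
    rw [← hitProb_add_surviveProb hlam hroot (mem_of_mem_children hc), add_sub_cancel_right]
    exact hitProb_le_mul_of_prefix hlam (fun h => notMem_singleton_dropLast hx0 h rfl)
      (prefix_of_mem_children hc)
  have hsum : ∑ c ∈ T.children hlf x, T.hitProb hlf lam {x.dropLast} ∅ c ≤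
      (T.numChildren x - T.numChildren x * (T.subtree x).escProb lam) *
        T.hitProb hlf lam {x.dropLast} ∅ x := by
    refine (Finset.sum_le_sum hchild).trans_eq ?_
    rw [← Finset.sum_mul, Finset.sum_sub_distrib, sum_surviveProb_children hlf hx hlam,
      Finset.sum_const, card_children, nsmul_one]
  have hfirst := hitProb_mul_one_add_eq (hlf := hlf) hlam hx0 hx hxpx (Set.notMem_empty x)
  rw [hitProb_of_mem (Set.mem_singleton _)] at hfirst
  nlinarith [mul_le_mul_of_nonneg_left hsum hlam]

theorem hitProb_parent_le (hlam : 0 < lam) (hroot : T.numChildren [] ≠ 0) (hx : x ∈ T.mem)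
    (hx0 : x ≠ []) (hα : 0 < α) (hαx : α ≤ (T.subtree x).escProb lam) :
    T.hitProb hlf lam {x.dropLast} ∅ x ≤ returnBound lam α := by
  have hk := numChildren_ne_zero_of_escProb_subtree_pos hlf hlam.le (hα.trans_le hαx)
  have hE1 := escProb_le_one (subtree_locFin hlf x) hlam.le
  have hk1 : (1 : ℝ) ≤ T.numChildren x := by exact_mod_cast Nat.one_le_iff_ne_zero.2 hk
  have hD : 0 < 1 + T.numChildren x * lam * (T.subtree x).escProb lam := by
    have := mul_nonneg (mul_nonneg (zero_le_one.trans hk1) hlam.le) (hα.le.trans hαx)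
    linarith
  refine le_trans ?_ (inv_le_returnBound hlam.le hk1 hα.le hαx hE1)
  rw [← one_div, le_div_iff₀ hD]
  exact hitProb_parent_mul_le_one hlam.le hroot hx hx0

theorem hitProb_nil_le_pow (hlam : 0 < lam) (hα : 0 < α)
    (hαT : ∀ v ∈ T.mem, α ≤ (T.subtree v).escProb lam) :
    ∀ x ∈ T.mem, T.hitProb hlf lam {[]} ∅ x ≤ returnBound lam α ^ x.length := by
  have hroot : T.numChildren [] ≠ 0 :=
    numChildren_ne_zero_of_escProb_subtree_pos hlf hlam.le (hα.trans_le (hαT [] T.root_mem))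
  have hb := returnBound_nonneg_of_le_escProb hlf hlam.le hαT
  intro x hx
  induction x using List.reverseRecOn with
  | nil => simpa using hitProb_le_one hlam.le []
  | append_singleton w a ih =>
    have hpar := hitProb_parent_le (hlf := hlf) hlam hroot hx (by simp) hα (hαT _ hx)
    rw [List.dropLast_concat] at hpar
    calc T.hitProb hlf lam {[]} ∅ (w ++ [a])
        ≤ T.hitProb hlf lam {w} ∅ (w ++ [a]) * T.hitProb hlf lam {[]} ∅ w := by
          rcases eq_or_ne w [] with rfl | hw0
          · rw [hitProb_of_mem (Set.mem_singleton _), mul_one]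
          · exact hitProb_le_mul_of_prefix hlam.le (fun h => hw0 (List.prefix_nil.1 h))
              (w.prefix_append [a])
      _ ≤ returnBound lam α * returnBound lam α ^ w.length :=
          mul_le_mul hpar (ih (T.parent_mem w a hx)) (hitProb_nonneg hlam.le w) hb
      _ = returnBound lam α ^ (w ++ [a]).length := by
          rw [List.length_append, List.length_singleton, pow_succ']

end ReturnToRoot

section Ball

def depthAtLeast (L : ℕ) : Set (List A) := {z | L ≤ z.length}

@[simp]
theorem mem_depthAtLeast {L : ℕ} {x : List A} : x ∈ depthAtLeast L ↔ L ≤ x.length := Iff.rfl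

variable {T : RTree A} {hlf : T.LocFin} {lam : ℝ} {L : ℕ} {U V K : Set (List A)} {y : List A}

theorem surviveWithin_succ_of_notMem (hy : y ∉ T.mem) (t : ℕ) :
    T.surviveWithin hlf lam K (t + 1) y = 0 := by
  by_cases hyK : y ∈ K
  · exact surviveWithin_of_mem hyK _
  · rw [surviveWithin_succ hyK]
    exact Finset.sum_eq_zero fun z _ => by
      rw [not_not.1 fun h => hy (mem_neighbors_of_step_ne_zero (hlf := hlf) h).1, zero_mul]

/-- Each step moves away from the root with probability at least `λ / (1 + λ)`. -/
theorem surviveWithin_le_one_sub_pow (hlam : 0 < lam) (hchild : ∀ v ∈ T.mem, T.numChildren v ≠ 0)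
    (hK : depthAtLeast L ⊆ K) :
    ∀ t, ∀ y ∈ T.mem, L ≤ t + y.length →
      T.surviveWithin hlf lam K t y ≤ 1 - (lam / (1 + lam)) ^ (L - y.length) := by
  have hq : lam / (1 + lam) ≤ 1 := (div_le_one (by positivity)).2 (by linarith)
  intro t
  induction t with
  | zero =>
    intro y _ hyL
    rw [surviveWithin_of_mem (hK (mem_depthAtLeast.2 (by omega))), sub_nonneg]
    exact pow_le_one₀ (by positivity) hq
  | succ t ih =>
    intro y hy hyL
    by_cases hyK : y ∈ K
    · rw [surviveWithin_of_mem hyK, sub_nonneg]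
      exact pow_le_one₀ (by positivity) hq
    have hyL' : y.length < L := not_le.1 fun h => hyK (hK h)
    have hchildren : ∀ c ∈ T.children hlf y,
        (lam / (1 + lam)) ^ (L - y.length - 1) ≤ 1 - T.surviveWithin hlf lam K t c := by
      intro c hc
      have := ih c (mem_of_mem_children hc) (by rw [length_of_mem_children hc]; omega)
      rw [length_of_mem_children hc, ← Nat.sub_sub] at this
      linarith
    have hgap := calc
      lam / (1 + lam) * (lam / (1 + lam)) ^ (L - y.length - 1)
          ≤ (∑ c ∈ T.children hlf y, T.step lam y c) *
              (lam / (1 + lam)) ^ (L - y.length - 1) := by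
            gcongr
            exact div_one_add_le_sum_step_children hlam (hchild y hy)
        _ ≤ ∑ c ∈ T.children hlf y, T.step lam y c * (1 - T.surviveWithin hlf lam K t c) := by
            rw [Finset.sum_mul]
            gcongr with c hc
            · exact step_nonneg hlam.le y c
            · exact hchildren c hc
        _ ≤ ∑ z ∈ T.neighbors hlf y, T.step lam y z * (1 - T.surviveWithin hlf lam K t z) :=
            Finset.sum_le_sum_of_subset_of_nonneg children_subset_neighbors fun z _ _ =>
              mul_nonneg (step_nonneg hlam.le y z)
                (sub_nonneg.2 (surviveWithin_mem_Icc hlam.le t z).2)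
    rw [← pow_succ', Nat.sub_add_cancel (by omega)] at hgap
    rw [surviveWithin_succ hyK]
    simp only [mul_sub, mul_one, Finset.sum_sub_distrib] at hgap
    linarith [sum_step_neighbors_le_one (hlf := hlf) hlam.le y]

theorem surviveWithin_mul_le_pow (hlam : 0 < lam) (hchild : ∀ v ∈ T.mem, T.numChildren v ≠ 0)
    (hL : 0 < L) (hK : depthAtLeast L ⊆ K) (a : ℕ) (y : List A) :
    T.surviveWithin hlf lam K (a * L) y ≤ (1 - (lam / (1 + lam)) ^ L) ^ a := by
  have hq : lam / (1 + lam) ≤ 1 := (div_le_one (by positivity)).2 (by linarith)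
  have hb : ∀ z, T.surviveWithin hlf lam K L z ≤ 1 - (lam / (1 + lam)) ^ L := by
    intro z
    by_cases hz : z ∈ T.mem
    · refine (surviveWithin_le_one_sub_pow hlam hchild hK L z hz (by omega)).trans ?_
      exact sub_le_sub_left (pow_le_pow_of_le_one (by positivity) hq (Nat.sub_le L _)) 1
    · obtain ⟨L', rfl⟩ := Nat.exists_eq_add_of_lt hL
      rw [zero_add, surviveWithin_succ_of_notMem hz, sub_nonneg]
      exact pow_le_one₀ (by positivity) hq
  induction a generalizing y with
  | zero => simpa using (surviveWithin_mem_Icc hlam.le 0 y).2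
  | succ a ih =>
    calc T.surviveWithin hlf lam K ((a + 1) * L) y
        = T.stoppedExpect hlf lam (killData K) (T.surviveWithin hlf lam K (a * L)) L y := by
          rw [add_mul, one_mul, add_comm]
          exact stoppedExpect_add L (a * L) y
      _ ≤ T.stoppedExpect hlf lam (killData K)
            (fun _ => (1 - (lam / (1 + lam)) ^ L) ^ a * 1) L y :=
          stoppedExpect_mono hlam.le (fun z => by simpa using ih z) L y
      _ = (1 - (lam / (1 + lam)) ^ L) ^ a * T.surviveWithin hlf lam K L y :=
          stoppedExpect_const_mul (fun _ _ => killData_eq_some) _ L y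
      _ ≤ (1 - (lam / (1 + lam)) ^ L) ^ (a + 1) := by
          rw [pow_succ]
          exact mul_le_mul_of_nonneg_left (hb y)
            (pow_nonneg (sub_nonneg.2 (pow_le_one₀ (by positivity) hq)) a)

theorem surviveProb_eq_zero (hlam : 0 < lam) (hchild : ∀ v ∈ T.mem, T.numChildren v ≠ 0)
    (hL : 0 < L) (hK : depthAtLeast L ⊆ K) (y : List A) : T.surviveProb hlf lam K y = 0 := by
  have hq0 : 0 < (lam / (1 + lam)) ^ L := by positivity
  have hq1 : (lam / (1 + lam)) ^ L ≤ 1 :=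
    pow_le_one₀ (by positivity) ((div_le_one (by positivity)).2 (by linarith))
  refine le_antisymm (ge_of_tendsto (tendsto_pow_atTop_nhds_zero_of_lt_one
    (r := 1 - (lam / (1 + lam)) ^ L) (by linarith) (by linarith))
    (Eventually.of_forall fun a => ?_)) (surviveProb_nonneg hlam.le y)
  exact (surviveProb_le_surviveWithin hlam.le (a * L) y).trans
    (surviveWithin_mul_le_pow hlam hchild hL hK a y)

/-- The walk leaves every ball almost surely, hence enters `U` before `V` or `V` before `U`. -/
theorem hitProb_add_hitProb (hlam : 0 < lam) (hchild : ∀ v ∈ T.mem, T.numChildren v ≠ 0)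
    (hL : 0 < L) (hUV : Disjoint U V) (hD : depthAtLeast L ⊆ U ∪ V) (hy : y ∈ T.mem) :
    T.hitProb hlf lam U V y + T.hitProb hlf lam V U y = 1 := by
  have h := ((tendsto_hitWithin (hlf := hlf) (U := U) (V := V) hlam.le y).add
    (tendsto_hitWithin (hlf := hlf) (U := V) (V := U) hlam.le y)).add
    (tendsto_surviveWithin (hlf := hlf) (K := U ∪ V) hlam.le y)
  rw [surviveProb_eq_zero hlam hchild hL hD, add_zero] at h
  refine tendsto_nhds_unique h ?_
  simpa only [hitWithin_add_hitWithin_add_surviveWithin hlam.le (hchild [] T.root_mem) hUV _ hy]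
    using tendsto_const_nhds

end Ball

section Climb

variable {T : RTree A} {hlf : T.LocFin} {lam : ℝ} {D U V V' : Set (List A)} {x y z : List A}

theorem hitProb_le_hitProb_of_subset (hlam : 0 ≤ lam) (hV : V' ⊆ V) (x : List A) :
    T.hitProb hlf lam U V x ≤ T.hitProb hlf lam U V' x := by
  have hall : ∀ z, z ∈ {z | z ∉ U ∧ z ∉ V} ∪ (U ∪ V) := fun z => by
    by_cases hzU : z ∈ U <;> by_cases hzV : z ∈ V <;> simp [hzU, hzV]
  refine hitProb_le fun t => le_of_superharmonic (T := T) (hlf := hlf)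
    (W := T.hitWithin hlf lam U V) (h := T.hitProb hlf lam U V') (R := {z | z ∉ U ∧ z ∉ V})
    (S := U ∪ V) hlam ?_ ?_ ?_ ?_ (fun _ _ y _ => hall y) t x (hall x)
  · rintro z (hz | hz) t
    · rw [hitWithin_of_mem hz, hitProb_of_mem hz]
    · by_cases hzU : z ∈ U
      · rw [hitWithin_of_mem hzU, hitProb_of_mem hzU]
      · rw [hitWithin_of_mem_right hzU hz]
        exact hitProb_nonneg hlam z
  · rintro z ⟨hzU, hzV⟩
    rw [hitWithin_zero hzU hzV]
    exact hitProb_nonneg hlam z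
  · rintro z ⟨hzU, hzV⟩ t
    exact (hitWithin_succ hzU hzV t).le
  · rintro z ⟨hzU, hzV⟩
    exact (hitProb_eq_sum hlam hzU fun h => hzV (hV h)).ge

theorem hitProb_dropLast_le (hlam : 0 ≤ lam) (hyD : y ∉ D) (hy0 : y ≠ []) (hz : y <+: z) :
    T.hitProb hlf lam D {y.dropLast} z ≤ T.hitProb hlf lam D {y} z +
      T.hitProb hlf lam {y} D z * T.hitProb hlf lam D {y.dropLast} y := by
  have hS : ∀ z ∈ ({y} ∪ D : Set (List A)), T.hitProb hlf lam D {y.dropLast} z = 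
      T.hitProb hlf lam D {y} z + T.hitProb hlf lam {y} D z *
        T.hitProb hlf lam D {y.dropLast} y := by
    rintro z (hzy | hzD)
    · rw [show z = y from hzy, hitProb_of_mem_right hyD (Set.mem_singleton y),
        hitProb_of_mem (Set.mem_singleton y), zero_add, one_mul]
    · have hzy : z ∉ ({y} : Set (List A)) := fun h => hyD ((Set.mem_singleton_iff.1 h) ▸ hzD)
      rw [hitProb_of_mem hzD, hitProb_of_mem_right hzy hzD, hitProb_of_mem hzD, zero_mul,
        add_zero]
  refine hitProb_le fun t => le_of_superharmonic (T := T) (hlf := hlf)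
    (W := T.hitWithin hlf lam D {y.dropLast}) (h := fun z => T.hitProb hlf lam D {y} z +
      T.hitProb hlf lam {y} D z * T.hitProb hlf lam D {y.dropLast} y) hlam
    (fun z hz t => (hS z hz).symm ▸ hitWithin_le_hitProb hlam t z) ?_ ?_ ?_
    (fun z hz w => mem_neighbors_prefix_mem_union (Or.inl rfl) hz) t z
    (prefix_mem_union hz)
  · rintro z ⟨hz, hzyD⟩
    rw [hitWithin_zero (fun h => hzyD (Or.inr h)) (notMem_singleton_dropLast hy0 hz)]
    exact add_nonneg (hitProb_nonneg hlam z)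
      (mul_nonneg (hitProb_nonneg hlam z) (hitProb_nonneg hlam y))
  · rintro z ⟨hz, hzyD⟩ t
    exact (hitWithin_succ (fun h => hzyD (Or.inr h)) (notMem_singleton_dropLast hy0 hz) t).le
  · rintro z ⟨-, hzyD⟩
    rw [hitProb_eq_sum hlam (fun h => hzyD (Or.inr h)) (fun h => hzyD (Or.inl h)),
      hitProb_eq_sum hlam (fun h => hzyD (Or.inl h)) (fun h => hzyD (Or.inr h)),
      Finset.sum_mul, ← Finset.sum_add_distrib]
    exact le_of_eq (Finset.sum_congr rfl fun w _ => by ring)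

theorem le_hitProb_dropLast (hlam : 0 ≤ lam) (hyD : y ∉ D) (hy0 : y ≠ []) (hz : y <+: z) :
    T.hitProb hlf lam D {y} z +
        T.hitProb hlf lam {y} D z * T.hitProb hlf lam D {y.dropLast} y ≤
      T.hitProb hlf lam D {y.dropLast} z := by
  set g := T.hitProb hlf lam D {y.dropLast} y
  have hS : ∀ z ∈ ({y} ∪ D : Set (List A)), ∀ s, T.hitWithin hlf lam D {y} s z +
      T.hitWithin hlf lam {y} D s z * g = T.hitProb hlf lam D {y.dropLast} z := by
    rintro z (hzy | hzD) s
    · rw [show z = y from hzy, hitWithin_of_mem_right hyD (Set.mem_singleton y),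
        hitWithin_of_mem (Set.mem_singleton y), zero_add, one_mul]
    · have hzy : z ∉ ({y} : Set (List A)) := fun h => hyD ((Set.mem_singleton_iff.1 h) ▸ hzD)
      rw [hitWithin_of_mem hzD, hitWithin_of_mem_right hzy hzD, hitProb_of_mem hzD, zero_mul,
        add_zero]
  refine le_of_tendsto' ((tendsto_hitWithin hlam z).add
    ((tendsto_hitWithin hlam z).mul_const g)) fun s => le_of_superharmonic (T := T)
    (hlf := hlf) (W := fun s z => T.hitWithin hlf lam D {y} s z +
      T.hitWithin hlf lam {y} D s z * g) (h := T.hitProb hlf lam D {y.dropLast}) hlam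
    (fun z hz s => (hS z hz s).le) ?_ ?_ ?_
    (fun z hz w => mem_neighbors_prefix_mem_union (Or.inl rfl) hz) s z
    (prefix_mem_union hz)
  · rintro z ⟨-, hzyD⟩
    rw [hitWithin_zero (fun h => hzyD (Or.inr h)) (fun h => hzyD (Or.inl h)),
      hitWithin_zero (fun h => hzyD (Or.inl h)) (fun h => hzyD (Or.inr h)), zero_mul, add_zero]
    exact hitProb_nonneg hlam z
  · rintro z ⟨-, hzyD⟩ s
    rw [hitWithin_succ (fun h => hzyD (Or.inr h)) (fun h => hzyD (Or.inl h)),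
      hitWithin_succ (fun h => hzyD (Or.inl h)) (fun h => hzyD (Or.inr h)), Finset.sum_mul,
      ← Finset.sum_add_distrib]
    exact le_of_eq (Finset.sum_congr rfl fun w _ => by ring)
  · rintro z ⟨hz, hzyD⟩
    exact (hitProb_eq_sum hlam (fun h => hzyD (Or.inr h)) (notMem_singleton_dropLast hy0 hz)).ge

/-- Strong Markov property at `y`: from the subtree of `y`, the walk reaches the parent of `y`
only through `y`. -/
theorem hitProb_dropLast_eq (hlam : 0 ≤ lam) (hyD : y ∉ D) (hy0 : y ≠ []) (hz : y <+: z) :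
    T.hitProb hlf lam D {y.dropLast} z = T.hitProb hlf lam D {y} z +
      T.hitProb hlf lam {y} D z * T.hitProb hlf lam D {y.dropLast} y :=
  le_antisymm (hitProb_dropLast_le hlam hyD hy0 hz) (le_hitProb_dropLast hlam hyD hy0 hz)

end Climb

section ClimbRecursion

variable (T : RTree A) (hlf : T.LocFin) (lam : ℝ)

/-- `climbProb lam n y` is the probability that the walk from `y` climbs `n` levels before it
reaches the parent of `y` (`hitProb_eq_climbProb`), computed by the effective-conductance
recursion over the children. -/
noncomputable def climbProb : ℕ → List A → ℝ
  | 0, _ => 1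
  | n + 1, y => lam * (∑ c ∈ T.children hlf y, climbProb n c) /
      (1 + lam * ∑ c ∈ T.children hlf y, climbProb n c)

variable {T hlf lam}

theorem climbProb_nonneg (hlam : 0 ≤ lam) : ∀ n y, 0 ≤ T.climbProb hlf lam n y
  | 0, _ => zero_le_one
  | n + 1, y => by
    have hS : 0 ≤ ∑ c ∈ T.children hlf y, T.climbProb hlf lam n c :=
      Finset.sum_nonneg fun c _ => climbProb_nonneg hlam n c
    have := mul_nonneg hlam hS
    exact div_nonneg this (by linarith)

theorem climbProb_le_climbProb {lam' : ℝ} (hlam : 0 ≤ lam) (h : lam ≤ lam') :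
    ∀ n y, T.climbProb hlf lam n y ≤ T.climbProb hlf lam' n y
  | 0, _ => le_rfl
  | n + 1, y => by
    have hS0 : 0 ≤ ∑ c ∈ T.children hlf y, T.climbProb hlf lam n c :=
      Finset.sum_nonneg fun c _ => climbProb_nonneg hlam n c
    have hle : ∑ c ∈ T.children hlf y, T.climbProb hlf lam n c ≤
        ∑ c ∈ T.children hlf y, T.climbProb hlf lam' n c :=
      Finset.sum_le_sum fun c _ => climbProb_le_climbProb hlam h n c
    have hS := mul_le_mul h hle hS0 (hlam.trans h)
    have h0 := mul_nonneg hlam hS0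
    simp only [climbProb]
    rw [div_le_div_iff₀ (by linarith) (by linarith)]
    nlinarith

theorem continuousOn_climbProb : ∀ (n : ℕ) (y : List A),
    ContinuousOn (fun lam => T.climbProb hlf lam n y) (Set.Ici 0)
  | 0, _ => continuousOn_const
  | n + 1, y => by
    have hS : ContinuousOn (fun lam => ∑ c ∈ T.children hlf y, T.climbProb hlf lam n c)
        (Set.Ici 0) := continuousOn_finsetSum _ fun c _ => continuousOn_climbProb n c
    refine (continuousOn_id.mul hS).div (continuousOn_const.add (continuousOn_id.mul hS))
      fun lam hlam => ?_
    have := mul_nonneg (Set.mem_Ici.1 hlam) (Finset.sum_nonneg fun c (_ : c ∈ T.children hlf y) =>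
      climbProb_nonneg (T := T) (hlf := hlf) (Set.mem_Ici.1 hlam) n c)
    linarith

theorem hitProb_eq_climbProb (hlam : 0 < lam) (hchild : ∀ v ∈ T.mem, T.numChildren v ≠ 0)
    {L : ℕ} : ∀ n, ∀ y ∈ T.mem, y ≠ [] → y.length + n = L →
      T.hitProb hlf lam (depthAtLeast L) {y.dropLast} y = T.climbProb hlf lam n y
  | 0, y, _, _, hyL => hitProb_of_mem (show L ≤ y.length by omega)
  | n + 1, y, hy, hy0, hyL => by
    have hyD : y ∉ depthAtLeast L := by
      rw [mem_depthAtLeast]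
      omega
    obtain ⟨g, hg⟩ : ∃ g, T.hitProb hlf lam (depthAtLeast L) {y.dropLast} y = g := ⟨_, rfl⟩
    have hchildren : ∀ c ∈ T.children hlf y, T.hitProb hlf lam (depthAtLeast L) {y.dropLast} c =
        T.climbProb hlf lam n c + (1 - T.climbProb hlf lam n c) * g := fun c hc => by
      have hG : T.hitProb hlf lam (depthAtLeast L) {y} c = T.climbProb hlf lam n c := by
        rw [← dropLast_of_mem_children hc]
        exact hitProb_eq_climbProb hlam hchild n c (mem_of_mem_children hc)
          (ne_nil_of_mem_children hc) (by rw [length_of_mem_children hc]; omega)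
      have hGH := hitProb_add_hitProb (hlf := hlf) hlam hchild (by omega : 0 < L)
        (Set.disjoint_singleton_right.2 hyD) Set.subset_union_left (mem_of_mem_children hc)
      have hH : T.hitProb hlf lam {y} (depthAtLeast L) c =
          1 - T.hitProb hlf lam (depthAtLeast L) {y} c := by linarith
      rw [hitProb_dropLast_eq hlam.le hyD hy0 (prefix_of_mem_children hc), hg, hH, hG]
    have hpy : y.dropLast ∉ depthAtLeast L := by
      rw [mem_depthAtLeast, List.length_dropLast]
      omega
    have hS0 : 0 ≤ ∑ c ∈ T.children hlf y, T.climbProb hlf lam n c :=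
      Finset.sum_nonneg fun c _ => climbProb_nonneg hlam.le n c
    have hfirst := hitProb_mul_one_add_eq (hlf := hlf) hlam.le hy0 hy hyD
      (notMem_singleton_dropLast hy0 (List.prefix_refl y))
    rw [hitProb_of_mem_right hpy (Set.mem_singleton _), hg, Finset.sum_congr rfl hchildren,
      Finset.sum_add_distrib, ← Finset.sum_mul, Finset.sum_sub_distrib, Finset.sum_const,
      card_children, nsmul_one] at hfirst
    rw [hg, climbProb, eq_div_iff (by nlinarith)]
    linear_combination hfirst

end ClimbRecursion

section Approximation

variable {T : RTree A} {hlf : T.LocFin} {lam lam' α α' : ℝ} {L : ℕ} {y : List A}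

theorem surviveProb_le_hitProb (hlam : 0 < lam) (hchild : ∀ v ∈ T.mem, T.numChildren v ≠ 0)
    (hL : 0 < L) (hy : y ∈ T.mem) :
    T.surviveProb hlf lam {[]} y ≤ T.hitProb hlf lam (depthAtLeast L) {[]} y := by
  have hnil : [] ∉ depthAtLeast (A := A) L := by
    rw [mem_depthAtLeast, List.length_nil]
    omega
  have h1 := hitProb_add_surviveProb (hlf := hlf) (K := {[]}) hlam.le (hchild [] T.root_mem) hy
  have h2 := hitProb_add_hitProb (hlf := hlf) hlam hchild hL
    (Set.disjoint_singleton_right.2 hnil) Set.subset_union_left hy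
  have h3 := hitProb_le_hitProb_of_subset (hlf := hlf) (U := {[]}) hlam.le
    (Set.empty_subset (depthAtLeast L)) y
  linarith

/-- A walk that reaches depth `L` returns to the root with probability at most
`returnBound lam α ^ L`. -/
theorem hitProb_nil_le (hlam : 0 < lam) (hα : 0 < α)
    (hαT : ∀ v ∈ T.mem, α ≤ (T.subtree v).escProb lam) (hy : y ∈ T.mem) :
    T.hitProb hlf lam {[]} ∅ y ≤ T.hitProb hlf lam {[]} (depthAtLeast L) y +
      T.hitProb hlf lam (depthAtLeast L) {[]} y * returnBound lam α ^ L := by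
  have hb0 := returnBound_nonneg_of_le_escProb hlf hlam.le hαT
  have hbL : 0 ≤ returnBound lam α ^ L := pow_nonneg hb0 L
  refine hitProb_le fun t => le_of_superharmonic (T := T) (hlf := hlf)
    (W := T.hitWithin hlf lam {[]} ∅) (h := fun z => T.hitProb hlf lam {[]} (depthAtLeast L) z +
      T.hitProb hlf lam (depthAtLeast L) {[]} z * returnBound lam α ^ L)
    (R := T.mem \ ({[]} ∪ depthAtLeast L)) (S := T.mem ∩ ({[]} ∪ depthAtLeast L)) hlam.le
    ?_ ?_ ?_ ?_ (fun z hz w hw => by rw [Set.sdiff_union_inter]; exact mem_of_mem_neighbors hz.1 hw)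
    t y (by rwa [Set.sdiff_union_inter])
  · rintro z ⟨hz, hz0 | hzD⟩ t
    · rw [Set.mem_singleton_iff.1 hz0, hitProb_of_mem (Set.mem_singleton _)]
      exact le_add_of_le_of_nonneg (hitWithin_mem_Icc hlam.le t _).2
        (mul_nonneg (hitProb_nonneg hlam.le _) hbL)
    · rw [hitProb_of_mem hzD, one_mul]
      calc T.hitWithin hlf lam {[]} ∅ t z ≤ T.hitProb hlf lam {[]} ∅ z :=
            hitWithin_le_hitProb hlam.le t z
        _ ≤ returnBound lam α ^ z.length := hitProb_nil_le_pow hlam hα hαT z hz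
        _ ≤ returnBound lam α ^ L :=
            pow_le_pow_of_le_one hb0 (returnBound_lt_one hlam hα).le hzD
        _ ≤ _ := le_add_of_nonneg_left (hitProb_nonneg hlam.le z)
  · rintro z ⟨-, hz⟩
    rw [hitWithin_zero (fun h => hz (Or.inl h)) (Set.notMem_empty z)]
    exact add_nonneg (hitProb_nonneg hlam.le z) (mul_nonneg (hitProb_nonneg hlam.le z) hbL)
  · rintro z ⟨-, hz⟩ t
    exact (hitWithin_succ (fun h => hz (Or.inl h)) (Set.notMem_empty z) t).le
  · rintro z ⟨-, hz⟩
    rw [hitProb_eq_sum hlam.le (fun h => hz (Or.inl h)) (fun h => hz (Or.inr h)),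
      hitProb_eq_sum hlam.le (fun h => hz (Or.inr h)) (fun h => hz (Or.inl h)), Finset.sum_mul,
      ← Finset.sum_add_distrib]
    exact le_of_eq (Finset.sum_congr rfl fun w _ => by ring)

theorem abs_surviveProb_sub_climbProb_le (hlam : 0 < lam) (hα : 0 < α)
    (hαT : ∀ v ∈ T.mem, α ≤ (T.subtree v).escProb lam) (n : ℕ) {c : List A}
    (hc : c ∈ T.children hlf []) :
    |T.surviveProb hlf lam {[]} c - T.climbProb hlf lam n c| ≤ returnBound lam α ^ (n + 1) := by
  have hchild : ∀ v ∈ T.mem, T.numChildren v ≠ 0 := fun v hv =>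
    numChildren_ne_zero_of_escProb_subtree_pos hlf hlam.le (hα.trans_le (hαT v hv))
  have hcm := mem_of_mem_children hc
  have hnil : [] ∉ depthAtLeast (A := A) (n + 1) := by simp
  have hG : T.hitProb hlf lam (depthAtLeast (n + 1)) {[]} c = T.climbProb hlf lam n c := by
    have := hitProb_eq_climbProb (hlf := hlf) hlam hchild n c hcm (ne_nil_of_mem_children hc)
      (by rw [length_of_mem_children hc, List.length_nil, zero_add, add_comm])
    rwa [dropLast_of_mem_children hc] at this
  have hupper := surviveProb_le_hitProb (hlf := hlf) hlam hchild n.succ_pos hcm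
  have hlower := hitProb_nil_le (hlf := hlf) (L := n + 1) hlam hα hαT hcm
  have hsum := hitProb_add_surviveProb (hlf := hlf) (K := {[]}) hlam.le (hchild [] T.root_mem) hcm
  have hball := hitProb_add_hitProb (hlf := hlf) hlam hchild n.succ_pos
    (Set.disjoint_singleton_left.2 hnil) Set.subset_union_right hcm
  have hb : T.hitProb hlf lam (depthAtLeast (n + 1)) {[]} c * returnBound lam α ^ (n + 1) ≤
      returnBound lam α ^ (n + 1) := mul_le_of_le_one_left
        (pow_nonneg (returnBound_nonneg_of_le_escProb hlf hlam.le hαT) _) (hitProb_le_one hlam.le c)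
  rw [← hG, abs_le]
  constructor <;> linarith

variable (T hlf lam) in
noncomputable def escProbApprox (n : ℕ) : ℝ :=
  (T.numChildren [] : ℝ)⁻¹ * ∑ c ∈ T.children hlf [], T.climbProb hlf lam n c

theorem abs_escProb_sub_escProbApprox_le (hlam : 0 < lam) (hα : 0 < α)
    (hαT : ∀ v ∈ T.mem, α ≤ (T.subtree v).escProb lam) (n : ℕ) :
    |T.escProb lam - T.escProbApprox hlf lam n| ≤ returnBound lam α ^ (n + 1) := by
  have hb0 := pow_nonneg (returnBound_nonneg_of_le_escProb hlf hlam.le hαT) (n + 1)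
  rw [escProb_eq (hlf := hlf) hlam.le, escProbApprox, ← mul_sub, ← Finset.sum_sub_distrib,
    abs_mul, abs_inv, Nat.abs_cast]
  calc (T.numChildren [] : ℝ)⁻¹ * |∑ c ∈ T.children hlf [],
        (T.surviveProb hlf lam {[]} c - T.climbProb hlf lam n c)|
      ≤ (T.numChildren [] : ℝ)⁻¹ * ∑ c ∈ T.children hlf [],
        |T.surviveProb hlf lam {[]} c - T.climbProb hlf lam n c| := by
        gcongr
        exact Finset.abs_sum_le_sum_abs _ _
    _ ≤ returnBound lam α ^ (n + 1) := inv_mul_sum_children_le hb0 fun c hc =>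
          abs_surviveProb_sub_climbProb_le hlam hα hαT n hc

end Approximation

section Continuity

variable {T : RTree A} {hlf : T.LocFin} {lam lam' α α' : ℝ}

theorem escProbApprox_le_escProbApprox (hlam : 0 ≤ lam) (h : lam ≤ lam') (n : ℕ) :
    T.escProbApprox hlf lam n ≤ T.escProbApprox hlf lam' n := by
  unfold escProbApprox
  gcongr with c
  exact climbProb_le_climbProb hlam h n c

theorem continuousOn_escProbApprox (n : ℕ) :
    ContinuousOn (fun lam => T.escProbApprox hlf lam n) (Set.Ici 0) :=
  continuousOn_const.mul (continuousOn_finsetSum _ fun c _ => continuousOn_climbProb n c)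

theorem escProb_le_escProb (hlf : T.LocFin) (hlam : 0 < lam) (h : lam ≤ lam') (hα : 0 < α)
    (hαT : ∀ v ∈ T.mem, α ≤ (T.subtree v).escProb lam) (hα' : 0 < α')
    (hα'T : ∀ v ∈ T.mem, α' ≤ (T.subtree v).escProb lam') :
    T.escProb lam ≤ T.escProb lam' := by
  have hlim : ∀ {μ β : ℝ}, 0 < μ → 0 < β → (∀ v ∈ T.mem, β ≤ (T.subtree v).escProb μ) →
      Tendsto (fun n : ℕ => returnBound μ β ^ (n + 1)) atTop (nhds 0) := fun hμ hβ hβT =>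
    (tendsto_pow_atTop_nhds_zero_of_lt_one (returnBound_nonneg_of_le_escProb hlf hμ.le hβT)
      (returnBound_lt_one hμ hβ)).comp (tendsto_add_atTop_nat 1)
  have hsum := ((hlim hlam hα hαT).add (hlim (hlam.trans_le h) hα' hα'T)).const_add
    (T.escProb lam')
  rw [add_zero, add_zero] at hsum
  refine ge_of_tendsto hsum (Eventually.of_forall fun n => ?_)
  have h1 := abs_le.1 (abs_escProb_sub_escProbApprox_le (hlf := hlf) hlam hα hαT n)
  have h2 := abs_le.1 (abs_escProb_sub_escProbApprox_le (hlf := hlf) (hlam.trans_le h) hα' hα'T n)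
  have h3 := escProbApprox_le_escProbApprox (hlf := hlf) hlam.le h n
  linarith

theorem le_escProb_subtree_of_le (hlf : T.LocFin) (hlam : 0 < lam) (h : lam ≤ lam')
    (hα : 0 < α) (hαT : ∀ v ∈ T.mem, α ≤ (T.subtree v).escProb lam) (hα' : 0 < α')
    (hα'T : ∀ v ∈ T.mem, α' ≤ (T.subtree v).escProb lam') :
    ∀ v ∈ T.mem, α ≤ (T.subtree v).escProb lam' := by
  have hsub : ∀ {β μ : ℝ}, (∀ v ∈ T.mem, β ≤ (T.subtree v).escProb μ) → ∀ v ∈ T.mem,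
      ∀ w ∈ (T.subtree v).mem, β ≤ ((T.subtree v).subtree w).escProb μ :=
    fun hβT v hv w hw => by
      rw [subtree_subtree]
      exact hβT (v ++ w) ((mem_subtree hv).1 hw)
  exact fun v hv => (hαT v hv).trans (escProb_le_escProb (subtree_locFin hlf v) hlam h hα
    (hsub hαT v hv) hα' (hsub hα'T v hv))

theorem lambdaC_nonneg (T : RTree A) : 0 ≤ T.lambdaC :=
  div_nonneg zero_le_one (Real.sSup_nonneg fun _ hx => zero_le_one.trans hx.1)

theorem continuousOn_escProb (hlf : T.LocFin) (hut : T.UniformlyTransient) :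
    ContinuousOn T.escProb (Set.Ioi T.lambdaC) := by
  intro lam hlam
  obtain ⟨lam₀, hlc, hlam₀⟩ := exists_between (Set.mem_Ioi.1 hlam)
  have hpos : 0 < lam₀ := T.lambdaC_nonneg.trans_lt hlc
  obtain ⟨α, hα, hαT⟩ := hut lam₀ hlc
  have hb0 := returnBound_nonneg_of_le_escProb hlf hpos.le hαT
  have hunif : ∀ n, ∀ μ ∈ Set.Ioi lam₀,
      |T.escProb μ - T.escProbApprox hlf μ n| ≤ returnBound lam₀ α ^ (n + 1) := by
    intro n μ hμ
    obtain ⟨β, hβ, hβT⟩ := hut μ (hlc.trans hμ)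
    have hαμ := le_escProb_subtree_of_le hlf hpos (le_of_lt hμ) hα hαT hβ hβT
    calc |T.escProb μ - T.escProbApprox hlf μ n| ≤ returnBound μ α ^ (n + 1) :=
          abs_escProb_sub_escProbApprox_le (hpos.trans hμ) hα hαμ n
      _ ≤ returnBound lam₀ α ^ (n + 1) :=
          pow_le_pow_left₀ (returnBound_nonneg_of_le_escProb hlf (hpos.trans hμ).le hαμ)
            (returnBound_le_returnBound hpos.le (le_of_lt hμ) hα.le) _
  have htend : TendstoUniformlyOn (fun n μ => T.escProbApprox hlf μ n) T.escProb atTop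
      (Set.Ioi lam₀) := by
    rw [Metric.tendstoUniformlyOn_iff]
    intro ε hε
    filter_upwards [((tendsto_pow_atTop_nhds_zero_of_lt_one hb0
      (returnBound_lt_one hpos hα)).comp (tendsto_add_atTop_nat 1)).eventually
        (gt_mem_nhds hε)] with n hn μ hμ
    exact (hunif n μ hμ).trans_lt hn
  have hcont := htend.continuousOn (Frequently.of_forall fun n =>
    (continuousOn_escProbApprox n).mono fun μ hμ => (hpos.trans hμ).le)
  exact (hcont.continuousAt (Ioi_mem_nhds hlam₀)).continuousWithinAt

theorem continuousOn_conductance (hlf : T.LocFin) (hut : T.UniformlyTransient) :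
    ContinuousOn T.conductance (Set.Ioi T.lambdaC) :=
  (continuousOn_id.mul continuousOn_const).mul (continuousOn_escProb hlf hut)

end Continuity

end RTree

theorem conductance_left_continuous_of_uniformly_transient_general (A : Type) (T : RTree A)
    (hlf : T.LocFin)
    (hut : T.UniformlyTransient)
    (lam : ℝ) (hlam : T.lambdaC < lam) :
    ContinuousWithinAt (fun x => T.conductance x) (Set.Iic lam) lam :=
  ((RTree.continuousOn_conductance hlf hut).continuousAt (Ioi_mem_nhds hlam)).continuousWithinAt

/-- For any infinite, locally finite rooted tree `T` that is uniformly
transient, the function `λ ↦ C(λ,T)` is left continuous on `(λ_c(T), +∞)`. -/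
theorem conductance_left_continuous_of_uniformly_transient (A : Type) (T : RTree A)
    (hinf : T.mem.Infinite) (hlf : T.LocFin)
    (hut : T.UniformlyTransient)
    (lam : ℝ) (hlam : T.lambdaC < lam) :
    ContinuousWithinAt (fun x => T.conductance x) (Set.Iic lam) lam :=
  conductance_left_continuous_of_uniformly_transient_general A T hlf hut lam hlam
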